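/- arXiv:2506.21995 — 7 statements merged into one kernel-verified Lean document; each statement's English description precedes it below -/
import Mathlib

section
/- Let n ≥ 2, let f be a monic real polynomial of degree n with n distinct real roots, and let g be a monic real polynomial of degree n−1 with n−1 distinct real roots such that the roots of g strictly interlace those of f (i.e., between any two consecutive roots of f there is exactly one root of g). Then the polynomial f(x) − x·g(x) has degree at most n−1 and has n−1 distinct real roots, exactly one in each open interval between consecutive roots of g together with (if deg(f − x·g) = n−1) one outside; in particular f(x) − x·g(x) lies in B_{n−1}. -/
open Polynomial

/-- A real polynomial all of whose roots are real and simple. -/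
def SimpleRealRoots (p : Polynomial ℝ) : Prop :=
  p ≠ 0 ∧ p.roots.card = p.natDegree ∧ p.roots.Nodup

/-- Membership in `Bₙ`: degree `n` or `n - 1` with all roots real and simple. -/
def MemB (n : ℕ) (p : Polynomial ℝ) : Prop :=
  SimpleRealRoots p ∧ (p.natDegree = n ∨ p.natDegree = n - 1)

lemma prod_neg_of_single_neg {m : ℕ} (P : Fin m → ℝ) (k : Fin m) (hk : P k < 0)
    (h : ∀ j, j ≠ k → 0 < P j) : ∏ j, P j < 0 := by
  rw [← Finset.mul_prod_erase Finset.univ P (Finset.mem_univ k)]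
  have hpos : 0 < ∏ j ∈ Finset.univ.erase k, P j :=
    Finset.prod_pos fun j hj => h j (Finset.ne_of_mem_erase hj)
  exact mul_neg_of_neg_of_pos hk hpos

lemma exists_root_Ioo (p : Polynomial ℝ) {a b : ℝ} (hab : a < b)
    (hsign : p.eval a * p.eval b < 0) : ∃ x ∈ Set.Ioo a b, p.IsRoot x := by
  have hc : ContinuousOn (fun x => p.eval x) (Set.Icc a b) :=
    (Polynomial.continuous p).continuousOn
  rcases lt_or_ge (p.eval a) 0 with ha | ha
  · have hb : 0 < p.eval b := by nlinarith
    obtain ⟨x, hx, hx0⟩ := intermediate_value_Ioo hab.le hc (Set.mem_Ioo.2 ⟨ha, hb⟩)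
    exact ⟨x, hx, hx0⟩
  · have hne : p.eval a ≠ 0 := by
      intro h; rw [h, zero_mul] at hsign; exact absurd hsign (lt_irrefl 0)
    have ha' : 0 < p.eval a := lt_of_le_of_ne ha (Ne.symm hne)
    have hb : p.eval b < 0 := by nlinarith
    obtain ⟨x, hx, hx0⟩ := intermediate_value_Ioo' hab.le hc (Set.mem_Ioo.2 ⟨hb, ha'⟩)
    exact ⟨x, hx, hx0⟩

lemma multiset_le_roots {m : ℕ} (p : Polynomial ℝ) (hp : p ≠ 0) (z : Fin m → ℝ)
    (hz : Function.Injective z) (hroot : ∀ i, p.IsRoot (z i)) :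
    (Finset.univ.val.map z) ≤ p.roots := by
  have hnd : (Finset.univ.val.map z).Nodup := Finset.univ.nodup.map hz
  refine (Multiset.le_iff_subset hnd).2 ?_
  intro a ha
  obtain ⟨i, _, rfl⟩ := Multiset.mem_map.1 ha
  exact (Polynomial.mem_roots hp).2 (hroot i)

lemma prod_X_sub_C_dvd' {m : ℕ} (p : Polynomial ℝ) (hp : p ≠ 0) (z : Fin m → ℝ)
    (hz : Function.Injective z) (hroot : ∀ i, p.IsRoot (z i)) :
    (∏ i, (X - C (z i))) ∣ p := by
  have h := (Multiset.prod_X_sub_C_dvd_iff_le_roots hp (Finset.univ.val.map z)).2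
    (multiset_le_roots p hp z hz hroot)
  rwa [Multiset.map_map, ← Finset.prod_eq_multiset_prod] at h

lemma natDegree_prod_X_sub_C {m : ℕ} (z : Fin m → ℝ) :
    (∏ i : Fin m, (X - C (z i))).natDegree = m := by
  rw [natDegree_prod _ _ fun i _ => X_sub_C_ne_zero (z i)]
  simp

lemma eq_prod_of_monic {m : ℕ} (p : Polynomial ℝ) (hp : p.Monic) (hd : p.natDegree = m)
    (z : Fin m → ℝ) (hz : Function.Injective z) (hroot : ∀ i, p.IsRoot (z i)) :
    p = ∏ i, (X - C (z i)) := by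
  obtain ⟨u, hu⟩ := prod_X_sub_C_dvd' p hp.ne_zero z hz hroot
  have hQm : (∏ i : Fin m, (X - C (z i))).Monic :=
    monic_prod_of_monic _ _ fun i _ => monic_X_sub_C (z i)
  have hQd := natDegree_prod_X_sub_C z
  have hu0 : u ≠ 0 := by
    intro h; rw [h, mul_zero] at hu; exact hp.ne_zero hu
  have hdeg : u.natDegree = 0 := by
    have := natDegree_mul hQm.ne_zero hu0
    rw [← hu, hd, hQd] at this; omega
  have hlc : u.leadingCoeff = 1 := by
    have : p.leadingCoeff = (∏ i : Fin m, (X - C (z i))).leadingCoeff * u.leadingCoeff := by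
      rw [hu, leadingCoeff_mul]
    rw [hp.leadingCoeff, hQm.leadingCoeff, one_mul] at this
    exact this.symm
  have : u = 1 := by
    rw [eq_C_of_natDegree_eq_zero hdeg]
    have : u.coeff 0 = 1 := by rw [← hlc, leadingCoeff, hdeg]
    rw [this, map_one]
  rw [hu, this, mul_one]

set_option maxHeartbeats 4000000 in
theorem stmt2 (n : ℕ) (hn : 2 ≤ n) (f g : Polynomial ℝ)
    (hfm : f.Monic) (hgm : g.Monic)
    (hfd : f.natDegree = n) (hgd : g.natDegree = n - 1)
    (t : Fin n → ℝ) (ht : StrictMono t)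
    (hft : ∀ x : ℝ, f.IsRoot x ↔ ∃ i, t i = x)
    (s : Fin (n - 1) → ℝ) (hs : StrictMono s)
    (hgs : ∀ x : ℝ, g.IsRoot x ↔ ∃ i, s i = x)
    (hint : ∀ i : Fin (n - 1),
      t (Fin.castLE (by omega) i) < s i ∧ s i < t (Fin.cast (by omega) i.succ)) :
    (f - Polynomial.X * g).natDegree ≤ n - 1 ∧
    MemB (n - 1) (f - Polynomial.X * g) ∧
    (∀ i j : Fin (n - 1), (j : ℕ) = (i : ℕ) + 1 →
      ∃! x : ℝ, x ∈ Set.Ioo (s i) (s j) ∧ (f - Polynomial.X * g).IsRoot x) ∧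
    ((f - Polynomial.X * g).natDegree = n - 1 →
      ∃ x : ℝ, (f - Polynomial.X * g).IsRoot x ∧
        ∀ i j : Fin (n - 1), (j : ℕ) = (i : ℕ) + 1 → x ∉ Set.Ioo (s i) (s j)) := by
  obtain ⟨k, rfl⟩ : ∃ k, n = k + 2 := ⟨n - 2, by omega⟩
  obtain ⟨h, hh⟩ : ∃ h : Polynomial ℝ, h = f - Polynomial.X * g := ⟨_, rfl⟩
  rw [← hh]
  -- basic index facts
  have hlow : ∀ i : Fin (k + 2 - 1), t ⟨i.val, by have := i.isLt; omega⟩ < s i :=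
    fun i => (hint i).1
  have hup : ∀ i : Fin (k + 2 - 1), s i < t ⟨i.val + 1, by have := i.isLt; omega⟩ :=
    fun i => (hint i).2
  -- f as a product
  have hfe : f = ∏ j : Fin (k + 2), (X - C (t j)) := by
    refine eq_prod_of_monic f hfm hfd t ht.injective fun j => (hft (t j)).2 ⟨j, rfl⟩
  have hfe' : ∀ y : ℝ, f.eval y = ∏ j : Fin (k + 2), (y - t j) := by
    intro y; rw [hfe, eval_prod]; simp
  -- eval of h at points s i
  have hgval : ∀ i : Fin (k + 2 - 1), g.eval (s i) = 0 := fun i => (hgs (s i)).2 ⟨i, rfl⟩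
  have hhval : ∀ i : Fin (k + 2 - 1), h.eval (s i) = f.eval (s i) := by
    intro i
    rw [hh, eval_sub, eval_mul, eval_X, hgval i, mul_zero, sub_zero]
  -- sign facts about f at the s points
  have fne : ∀ i : Fin (k + 2 - 1), f.eval (s i) ≠ 0 := by
    intro i
    rw [hfe']
    refine Finset.prod_ne_zero_iff.2 fun j _ => sub_ne_zero.2 ?_
    intro he
    have hilt := i.isLt
    rcases le_or_gt j.val i.val with hji | hji
    · have h1 : t j ≤ t ⟨i.val, by omega⟩ := ht.monotone (by simp only [Fin.le_def, Fin.val_mk]; omega)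
      have h2 := hlow i
      rw [he] at h2; linarith
    · have h1 : t ⟨i.val + 1, by omega⟩ ≤ t j := ht.monotone (by simp only [Fin.le_def, Fin.val_mk]; omega)
      have h2 := hup i
      rw [he] at h2; linarith
  have fsign : ∀ i i' : Fin (k + 2 - 1), i'.val = i.val + 1 →
      f.eval (s i) * f.eval (s i') < 0 := by
    intro i i' hii'
    rw [hfe' (s i), hfe' (s i'), ← Finset.prod_mul_distrib]
    have hi'lt := i'.isLt
    refine prod_neg_of_single_neg _ ⟨i.val + 1, by omega⟩ ?_ ?_
    · have h1 : s i < t ⟨i.val + 1, by omega⟩ := hup i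
      have h2 : t ⟨i.val + 1, by omega⟩ < s i' := by
        have := hlow i'
        have he : (⟨i'.val, by omega⟩ : Fin (k + 2)) = ⟨i.val + 1, by omega⟩ := by
          simp [Fin.ext_iff, hii']
        rwa [he] at this
      exact mul_neg_of_neg_of_pos (by linarith) (by linarith)
    · intro j hj
      have hjv : j.val ≠ i.val + 1 := fun hv => hj (Fin.ext hv)
      rcases le_or_gt j.val i.val with hji | hji
      · have h1 : t j ≤ t ⟨i.val, by omega⟩ := ht.monotone (by simp only [Fin.le_def, Fin.val_mk]; omega)
        have h2 := hlow i
        have h3 : s i < s i' := hs (by simp only [Fin.lt_def, Fin.val_mk]; omega)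
        exact mul_pos (by linarith) (by linarith)
      · have hji2 : i.val + 2 ≤ j.val := by omega
        have h1 : t ⟨i'.val + 1, by omega⟩ ≤ t j := ht.monotone (by simp only [Fin.le_def, Fin.val_mk]; omega)
        have h2 := hup i'
        have h3 : s i < s i' := hs (by simp only [Fin.lt_def, Fin.val_mk]; omega)
        exact mul_pos_of_neg_of_neg (by linarith) (by linarith)
  -- h is nonzero
  have hne0 : h ≠ 0 := by
    intro h0
    have := hhval ⟨0, by omega⟩
    rw [h0] at this
    exact fne _ (by simpa using this.symm)
  -- degree bound
  have hdle : h.natDegree ≤ k + 1 := by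
    have hxg : (Polynomial.X * g).Monic := monic_X.mul hgm
    have hxgd : (Polynomial.X * g).natDegree = k + 2 := by
      rw [natDegree_mul X_ne_zero hgm.ne_zero, natDegree_X, hgd]; omega
    have hdeg : h.degree < f.degree := by
      rw [hh]
      refine degree_sub_lt ?_ hfm.ne_zero ?_
      · rw [degree_eq_natDegree hfm.ne_zero, degree_eq_natDegree hxg.ne_zero, hfd, hxgd]
      · rw [hfm.leadingCoeff, hxg.leadingCoeff]
    have := natDegree_lt_natDegree hne0 hdeg
    omega
  -- construct the interior roots
  have hroot_int : ∀ i : Fin k, ∃ y ∈ Set.Ioo (s ⟨i.val, by have := i.isLt; omega⟩)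
      (s ⟨i.val + 1, by have := i.isLt; omega⟩), h.IsRoot y := by
    intro i
    have hik := i.isLt
    refine exists_root_Ioo h (hs (by simp only [Fin.lt_def, Fin.val_mk]; omega)) ?_
    rw [hhval, hhval]
    exact fsign _ _ rfl
  choose x hx using hroot_int
  have hxmem : ∀ i : Fin k, s ⟨i.val, by have := i.isLt; omega⟩ < x i ∧
      x i < s ⟨i.val + 1, by have := i.isLt; omega⟩ := fun i => ⟨(hx i).1.1, (hx i).1.2⟩
  have hxroot : ∀ i : Fin k, h.IsRoot (x i) := fun i => (hx i).2
  have hxmono : StrictMono x := by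
    intro i j hij
    have hik := i.isLt; have hjk := j.isLt
    have h1 := (hxmem i).2
    have h2 := (hxmem j).1
    have h3 : s ⟨i.val + 1, by omega⟩ ≤ s ⟨j.val, by omega⟩ :=
      hs.monotone (by simp only [Fin.le_def, Fin.val_mk]; omega)
    linarith
  -- any x j in interval m implies j = m
  have hxint : ∀ j mm : Fin k,
      x j ∈ Set.Ioo (s ⟨mm.val, by have := mm.isLt; omega⟩)
        (s ⟨mm.val + 1, by have := mm.isLt; omega⟩) → j = mm := by
    intro j mm hmem
    have hjk := j.isLt; have hmk := mm.isLt
    by_contra hne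
    rcases lt_or_gt_of_ne (fun hv => hne (Fin.ext hv) : j.val ≠ mm.val) with hlt | hgt
    · have h1 := (hxmem j).2
      have h2 : s ⟨j.val + 1, by omega⟩ ≤ s ⟨mm.val, by omega⟩ :=
        hs.monotone (by simp only [Fin.le_def, Fin.val_mk]; omega)
      have h3 := hmem.1
      linarith
    · have h1 := (hxmem j).1
      have h2 : s ⟨mm.val + 1, by omega⟩ ≤ s ⟨j.val, by omega⟩ :=
        hs.monotone (by simp only [Fin.le_def, Fin.val_mk]; omega)
      have h3 := hmem.2
      linarith
  -- lower bound on degree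
  have hXle : (Finset.univ.val.map x) ≤ h.roots :=
    multiset_le_roots h hne0 x hxmono.injective hxroot
  have hcard_le : Multiset.card h.roots ≤ h.natDegree := card_roots' h
  have hk_le : k ≤ Multiset.card h.roots := by
    have := Multiset.card_le_card hXle
    simpa using this
  have hdge : k ≤ h.natDegree := le_trans hk_le hcard_le
  have hdcases : h.natDegree = k ∨ h.natDegree = k + 1 := by omega
  rcases hdcases with hcase | hcase
  · -- degree k case
    have hroots_eq : h.roots = Finset.univ.val.map x := by
      refine (Multiset.eq_of_le_of_card_le hXle ?_).symm
      simpa using hcard_le.trans hcase.le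
    have hmem_root : ∀ y : ℝ, h.IsRoot y → ∃ j : Fin k, x j = y := by
      intro y hy
      have hmem : y ∈ h.roots := (mem_roots hne0).2 hy
      rw [hroots_eq] at hmem
      obtain ⟨w, _, hw⟩ := Multiset.mem_map.1 hmem
      exact ⟨w, hw⟩
    refine ⟨by omega, ⟨⟨hne0, ?_, ?_⟩, by omega⟩, ?_, ?_⟩
    · rw [hroots_eq, hcase]; simp
    · rw [hroots_eq]; exact Finset.univ.nodup.map hxmono.injective
    · intro i j hj
      have hik : i.val < k := by have := j.isLt; omega
      have hjeq : j = (⟨i.val + 1, by have := j.isLt; omega⟩ : Fin (k + 2 - 1)) := Fin.ext hj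
      refine ⟨x ⟨i.val, hik⟩, ⟨Set.mem_Ioo.2 ⟨?_, ?_⟩, hxroot _⟩, ?_⟩
      · exact (hxmem ⟨i.val, hik⟩).1
      · rw [hjeq]; exact (hxmem ⟨i.val, hik⟩).2
      · rintro y ⟨hyIoo, hyroot⟩
        obtain ⟨jj, rfl⟩ := hmem_root y hyroot
        have hje : jj = ⟨i.val, hik⟩ := by
          refine hxint jj ⟨i.val, hik⟩ (Set.mem_Ioo.2 ⟨?_, ?_⟩)
          · exact hyIoo.1
          · rw [hjeq] at hyIoo; exact hyIoo.2
        rw [hje]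
    · intro hdeg'; exfalso; omega
  · -- degree k + 1 case
    obtain ⟨q, hq⟩ := prod_X_sub_C_dvd' h hne0 x hxmono.injective hxroot
    have hQd := natDegree_prod_X_sub_C x
    have hq0 : q ≠ 0 := by intro h0; rw [h0, mul_zero] at hq; exact hne0 hq
    have hQ0 : (∏ i : Fin k, (X - C (x i))) ≠ 0 := by
      intro h0; rw [h0, zero_mul] at hq; exact hne0 hq
    have hqd : q.natDegree = 1 := by
      have := natDegree_mul hQ0 hq0; rw [← hq, hcase, hQd] at this; omega
    have ha0 : q.coeff 1 ≠ 0 := by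
      have hlc : q.coeff 1 = q.leadingCoeff := by rw [leadingCoeff, hqd]
      rw [hlc]; exact leadingCoeff_ne_zero.2 hq0
    obtain ⟨r, hr⟩ : ∃ r : ℝ, r = -q.coeff 0 / q.coeff 1 := ⟨_, rfl⟩
    have hqy : ∀ y : ℝ, q.eval y = q.coeff 1 * (y - r) := by
      intro y
      conv_lhs => rw [eq_X_add_C_of_natDegree_le_one hqd.le]
      simp only [eval_add, eval_mul, eval_C, eval_X]
      rw [hr]; field_simp; ring
    have hhy : ∀ y : ℝ, h.eval y = (∏ i : Fin k, (y - x i)) * (q.coeff 1 * (y - r)) := by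
      intro y; rw [hq, eval_mul, eval_prod, hqy]; simp
    have hroot_r : h.IsRoot r := by rw [IsRoot, hhy]; simp
    have hsne : ∀ i : Fin (k + 2 - 1), r ≠ s i := by
      intro i he
      have h1 := hroot_r
      rw [IsRoot, he, hhval i] at h1
      exact fne i h1
    have houtside : r < s ⟨0, by omega⟩ ∨ s ⟨k, by omega⟩ < r := by
      by_contra hcon
      push_neg at hcon
      obtain ⟨hc1, hc2⟩ := hcon
      have hr0 : s ⟨0, by omega⟩ < r := lt_of_le_of_ne hc1 ((hsne _).symm)
      classical
      set A := Finset.univ.filter (fun jj : Fin (k + 2 - 1) => s jj < r) with hA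
      have hA0 : (⟨0, by omega⟩ : Fin (k + 2 - 1)) ∈ A := by
        simp only [hA, Finset.mem_filter, Finset.mem_univ, true_and]; exact hr0
      have hAne : A.Nonempty := ⟨_, hA0⟩
      have hMA : A.max' hAne ∈ A := A.max'_mem hAne
      have hMr : s (A.max' hAne) < r := by
        simpa only [hA, Finset.mem_filter, Finset.mem_univ, true_and] using hMA
      have hMlt := (A.max' hAne).isLt
      have hMk : (A.max' hAne).val < k := by
        rcases Nat.lt_or_ge (A.max' hAne).val k with h' | h'
        · exact h'
        · exfalso
          have he : A.max' hAne = (⟨k, by omega⟩ : Fin (k + 2 - 1)) := Fin.ext (by simp only [Fin.val_mk]; omega)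
          rw [he] at hMr; linarith
      have hMr1 : r < s ⟨(A.max' hAne).val + 1, by omega⟩ := by
        have hnotin : (⟨(A.max' hAne).val + 1, by omega⟩ : Fin (k + 2 - 1)) ∉ A := by
          intro hin
          have hle := A.le_max' _ hin
          have := Fin.le_def.1 hle
          simp only [Fin.val_mk] at this; omega
        have hnlt : ¬ (s ⟨(A.max' hAne).val + 1, by omega⟩ < r) := by
          intro hlt
          exact hnotin (by simp only [hA, Finset.mem_filter, Finset.mem_univ, true_and]; exact hlt)
        exact lt_of_le_of_ne (le_of_not_gt hnlt) (hsne _)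
      have hneg : h.eval (s (A.max' hAne)) * h.eval (s ⟨(A.max' hAne).val + 1, by omega⟩) < 0 := by
        rw [hhval, hhval]; exact fsign _ _ rfl
      have key : h.eval (s (A.max' hAne)) * h.eval (s ⟨(A.max' hAne).val + 1, by omega⟩) =
          (∏ i : Fin k, ((s (A.max' hAne) - x i) * (s ⟨(A.max' hAne).val + 1, by omega⟩ - x i))) *
            ((q.coeff 1 * q.coeff 1) *
              ((s (A.max' hAne) - r) * (s ⟨(A.max' hAne).val + 1, by omega⟩ - r))) := by
        rw [hhy, hhy, Finset.prod_mul_distrib]; ring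
      have hprodneg :
          (∏ i : Fin k, ((s (A.max' hAne) - x i) * (s ⟨(A.max' hAne).val + 1, by omega⟩ - x i))) < 0 := by
        refine prod_neg_of_single_neg _ ⟨(A.max' hAne).val, hMk⟩ ?_ ?_
        · have h1 := (hxmem ⟨(A.max' hAne).val, hMk⟩).1
          have h2 := (hxmem ⟨(A.max' hAne).val, hMk⟩).2
          exact mul_neg_of_neg_of_pos (by linarith) (by linarith)
        · intro j hj
          have hjM : j.val ≠ (A.max' hAne).val := fun hv => hj (Fin.ext hv)
          have hjk := j.isLt
          rcases Nat.lt_or_ge j.val (A.max' hAne).val with hlt | hge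
          · have h1 := (hxmem j).2
            have h2 : s ⟨j.val + 1, by omega⟩ ≤ s (A.max' hAne) :=
              hs.monotone (by simp only [Fin.le_def, Fin.val_mk]; omega)
            have h3 : s (A.max' hAne) < s ⟨(A.max' hAne).val + 1, by omega⟩ :=
              hs (by simp only [Fin.lt_def, Fin.val_mk]; omega)
            exact mul_pos (by linarith) (by linarith)
          · have h1 := (hxmem j).1
            have h2 : s ⟨(A.max' hAne).val + 1, by omega⟩ ≤ s ⟨j.val, by omega⟩ :=
              hs.monotone (by simp only [Fin.le_def, Fin.val_mk]; omega)
            exact mul_pos_of_neg_of_neg (by linarith) (by linarith)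
      have haa : 0 < q.coeff 1 * q.coeff 1 := mul_self_pos.2 ha0
      have hrr : (s (A.max' hAne) - r) * (s ⟨(A.max' hAne).val + 1, by omega⟩ - r) < 0 :=
        mul_neg_of_neg_of_pos (by linarith) (by linarith)
      have hpos : 0 < h.eval (s (A.max' hAne)) * h.eval (s ⟨(A.max' hAne).val + 1, by omega⟩) := by
        rw [key]
        exact mul_pos_of_neg_of_neg hprodneg (mul_neg_of_pos_of_neg haa hrr)
      linarith
    have hrx : ∀ i : Fin k, r ≠ x i := by
      intro i he
      have h1 := (hxmem i).1
      have h2 := (hxmem i).2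
      have hik := i.isLt
      rcases houtside with hout | hout
      · have hle : s ⟨0, by omega⟩ ≤ s ⟨i.val, by omega⟩ :=
          hs.monotone (by simp only [Fin.le_def, Fin.val_mk]; omega)
        rw [he] at hout; linarith
      · have hle : s ⟨i.val + 1, by omega⟩ ≤ s ⟨k, by omega⟩ :=
          hs.monotone (by simp only [Fin.le_def, Fin.val_mk]; omega)
        rw [he] at hout; linarith
    have hzinj : Function.Injective (Fin.cons r x : Fin (k + 1) → ℝ) := by
      intro a1 a2 hea
      rcases Fin.eq_zero_or_eq_succ a1 with rfl | ⟨j1, rfl⟩ <;>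
        rcases Fin.eq_zero_or_eq_succ a2 with rfl | ⟨j2, rfl⟩
      · rfl
      · simp only [Fin.cons_zero, Fin.cons_succ] at hea
        exact absurd hea (hrx j2)
      · simp only [Fin.cons_zero, Fin.cons_succ] at hea
        exact absurd hea.symm (hrx j1)
      · simp only [Fin.cons_succ] at hea
        rw [hxmono.injective hea]
    have hzroot : ∀ i : Fin (k + 1), h.IsRoot ((Fin.cons r x : Fin (k + 1) → ℝ) i) := by
      intro i
      rcases Fin.eq_zero_or_eq_succ i with rfl | ⟨j, rfl⟩
      · simpa using hroot_r
      · simpa using hxroot j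
    have hZle := multiset_le_roots h hne0 _ hzinj hzroot
    have hroots_eq : h.roots = Finset.univ.val.map (Fin.cons r x : Fin (k + 1) → ℝ) := by
      refine (Multiset.eq_of_le_of_card_le hZle ?_).symm
      simpa using hcard_le.trans hcase.le
    have hmem_root : ∀ y : ℝ, h.IsRoot y → y = r ∨ ∃ j : Fin k, x j = y := by
      intro y hy
      have hmem : y ∈ h.roots := (mem_roots hne0).2 hy
      rw [hroots_eq] at hmem
      obtain ⟨w, _, hw⟩ := Multiset.mem_map.1 hmem
      rcases Fin.eq_zero_or_eq_succ w with rfl | ⟨j, rfl⟩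
      · left; rw [← hw]; simp
      · right; exact ⟨j, by rw [← hw]; simp⟩
    refine ⟨by omega, ⟨⟨hne0, ?_, ?_⟩, by omega⟩, ?_, ?_⟩
    · rw [hroots_eq, hcase]; simp
    · rw [hroots_eq]; exact Finset.univ.nodup.map hzinj
    · intro i j hj
      have hik : i.val < k := by have := j.isLt; omega
      have hjeq : j = (⟨i.val + 1, by have := j.isLt; omega⟩ : Fin (k + 2 - 1)) := Fin.ext hj
      refine ⟨x ⟨i.val, hik⟩, ⟨Set.mem_Ioo.2 ⟨?_, ?_⟩, hxroot _⟩, ?_⟩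
      · exact (hxmem ⟨i.val, hik⟩).1
      · rw [hjeq]; exact (hxmem ⟨i.val, hik⟩).2
      · rintro y ⟨hyIoo, hyroot⟩
        rcases hmem_root y hyroot with rfl | ⟨jj, rfl⟩
        · exfalso
          rcases houtside with hout | hout
          · have hle : s ⟨0, by omega⟩ ≤ s i :=
              hs.monotone (by simp only [Fin.le_def, Fin.val_mk]; omega)
            have := hyIoo.1; linarith
          · have hle : s j ≤ s ⟨k, by omega⟩ :=
              hs.monotone (by simp only [Fin.le_def, Fin.val_mk]; have := j.isLt; omega)
            have := hyIoo.2; linarith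
        · have hje : jj = ⟨i.val, hik⟩ := by
            refine hxint jj ⟨i.val, hik⟩ (Set.mem_Ioo.2 ⟨?_, ?_⟩)
            · exact hyIoo.1
            · rw [hjeq] at hyIoo; exact hyIoo.2
          rw [hje]
    · intro _
      refine ⟨r, hroot_r, ?_⟩
      intro i j hj hin
      rcases houtside with hout | hout
      · have hle : s ⟨0, by omega⟩ ≤ s i :=
          hs.monotone (by simp only [Fin.le_def, Fin.val_mk]; omega)
        have := hin.1; linarith
      · have hle : s j ≤ s ⟨k, by omega⟩ :=
          hs.monotone (by simp only [Fin.le_def, Fin.val_mk]; have := j.isLt; omega)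
        have := hin.2; linarith
end

section
/- Let f be a real polynomial with all roots real and simple, and let d satisfy 0 < d < sep(f). Then for all real x, f′(x)·f(x+d) − f(x)·f′(x+d) > 0. -/
open Polynomial

/-- The minimal distance between distinct real roots of `p`
(`+∞` if `p` has at most one root). -/
noncomputable def rootSep (p : Polynomial ℝ) : ENNReal :=
  ⨅ (s : ℝ) (t : ℝ) (_ : p.IsRoot s) (_ : p.IsRoot t) (_ : s ≠ t), ENNReal.ofReal |s - t|

theorem stmt4 (f : Polynomial ℝ) (hf : SimpleRealRoots f) (hnc : 0 < f.natDegree)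
    (d : ℝ) (hd : 0 < d) (hsep : ENNReal.ofReal d < rootSep f) :
    ∀ x : ℝ,
      0 < (Polynomial.derivative f).eval x * f.eval (x + d) -
            f.eval x * (Polynomial.derivative f).eval (x + d) := by
  classical
  obtain ⟨hf0, hcard, hnodup⟩ := hf
  intro x
  set c : ℝ := f.leadingCoeff with hc
  have hc0 : c ≠ 0 := leadingCoeff_ne_zero.mpr hf0
  set s : Finset ℝ := f.roots.toFinset with hs
  have hscard : s.card = f.natDegree := by
    rw [hs, Multiset.toFinset_card_of_nodup hnodup, hcard]
  have hsne : s.Nonempty := Finset.card_pos.mp (by omega)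
  -- membership in s means being a root
  have hmem : ∀ a ∈ s, f.IsRoot a := by
    intro a ha
    exact (mem_roots hf0).mp (Multiset.mem_toFinset.mp ha)
  -- separation
  have hgap : ∀ a ∈ s, ∀ b ∈ s, a ≠ b → d < |a - b| := by
    intro a ha b hb hab
    have h1 : rootSep f ≤ ENNReal.ofReal |a - b| := by
      refine le_trans ?_ (le_refl _)
      exact iInf_le_of_le a (iInf_le_of_le b (iInf_le_of_le (hmem a ha)
        (iInf_le_of_le (hmem b hb) (iInf_le_of_le hab le_rfl))))
    have h2 : ENNReal.ofReal d < ENNReal.ofReal |a - b| := lt_of_lt_of_le hsep h1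
    exact (ENNReal.ofReal_lt_ofReal_iff_of_nonneg hd.le).mp h2
  -- f as a product over its roots
  have hfs : f = C c * ∏ r ∈ s, (X - C r) := by
    have := C_leadingCoeff_mul_prod_multiset_X_sub_C (p := f) hcard
    rw [← this]
    congr 1
    rw [Finset.prod, hs, Multiset.toFinset_val, Multiset.dedup_eq_self.mpr hnodup]
  -- the shifted polynomial
  set g : Polynomial ℝ := f.comp (X + C d) with hg
  have hgeval : ∀ y : ℝ, g.eval y = f.eval (y + d) := by
    intro y; simp [hg, eval_comp]
  have hgderiv : derivative g = (derivative f).comp (X + C d) := by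
    rw [hg, derivative_comp]; simp
  -- degree facts
  have hXd : (X + C d : Polynomial ℝ).natDegree = 1 := natDegree_X_add_C d
  have hgnat : g.natDegree = f.natDegree := by
    rw [hg, natDegree_comp, hXd, mul_one]
  have hglc : g.leadingCoeff = c := by
    rw [hg, leadingCoeff_comp (by rw [hXd]; exact one_ne_zero)]
    simp [hc]
  have hgne : g ≠ 0 := fun h => hc0 (by rw [← hglc, h, leadingCoeff_zero])
  have hdegfg : g.degree = f.degree := by
    rw [degree_eq_natDegree hgne, degree_eq_natDegree hf0, hgnat]
  have hgf_deg : (g - f).degree < (s.card : ℕ) := by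
    have h := degree_sub_lt hdegfg hgne (by rw [hglc])
    rw [hdegfg, degree_eq_natDegree hf0] at h
    rw [hscard]
    exact_mod_cast h
  -- Lagrange interpolation of g - f at the roots
  have hinj : Set.InjOn (id : ℝ → ℝ) s := Function.injective_id.injOn
  have hinterp : g - f = ∑ i ∈ s, C (g.eval i) * Lagrange.basis s id i := by
    have h := Lagrange.eq_interpolate (v := id) (s := s) hinj hgf_deg (f := g - f)
    rw [h, Lagrange.interpolate_apply]
    refine Finset.sum_congr rfl fun i hi => ?_
    congr 1
    rw [eval_sub]
    simp [(hmem i hi).eq_zero]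
  -- weights
  set q : ℝ → Polynomial ℝ := fun i => ∏ j ∈ s.erase i, (X - C j) with hqdef
  set w : ℝ → ℝ := fun i => ∏ j ∈ s.erase i, (i - j)⁻¹ with hwdef
  have hkey : ∀ i ∈ s, derivative f * Lagrange.basis s id i
      - f * derivative (Lagrange.basis s id i) = C (c * w i) * (q i) ^ 2 := by
    intro i hi
    have hB : Lagrange.basis s id i = C (w i) * q i := by
      rw [Lagrange.basis]
      simp only [id]
      rw [show (fun j => Lagrange.basisDivisor i j)
          = fun j => C (i - j)⁻¹ * (X - C j) from rfl]
      rw [Finset.prod_mul_distrib, ← map_prod]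
    have hfi : f = C c * ((X - C i) * q i) := by
      rw [hfs, ← Finset.mul_prod_erase _ _ hi]
    rw [hB, hfi, derivative_C_mul, derivative_C_mul, derivative_mul, derivative_X_sub_C,
      C_mul]
    ring
  -- the Wronskian identity
  have hW : derivative f * g - f * derivative g
      = ∑ i ∈ s, C (g.eval i) * (C (c * w i) * (q i) ^ 2) := by
    have h1 : derivative f * g - f * derivative g
        = derivative f * (g - f) - f * derivative (g - f) := by
      rw [derivative_sub]; ring
    rw [h1, hinterp, derivative_sum, Finset.mul_sum, Finset.mul_sum,
      ← Finset.sum_sub_distrib]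
    refine Finset.sum_congr rfl fun i hi => ?_
    rw [derivative_C_mul, ← hkey i hi]
    ring
  -- evaluate at x
  have hWx : (derivative f).eval x * f.eval (x + d) - f.eval x * (derivative f).eval (x + d)
      = ∑ i ∈ s, g.eval i * (c * w i) * ((q i).eval x) ^ 2 := by
    have := congrArg (eval x) hW
    rw [eval_sub, eval_mul, eval_mul, eval_finset_sum] at this
    rw [hgeval x] at this
    have hdg : (derivative g).eval x = (derivative f).eval (x + d) := by
      rw [hgderiv, eval_comp]; simp
    rw [hdg] at this
    rw [this]
    refine Finset.sum_congr rfl fun i hi => ?_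
    rw [eval_mul, eval_mul, eval_C, eval_C, eval_pow]
    ring
  rw [hWx]
  -- positivity of the weights
  have hmu : ∀ i ∈ s, 0 < g.eval i * (c * w i) := by
    intro i hi
    have hgi : g.eval i = c * (d * ∏ j ∈ s.erase i, (i + d - j)) := by
      rw [hgeval i, hfs]
      rw [eval_mul, eval_C, eval_prod]
      congr 1
      rw [← Finset.mul_prod_erase _ _ hi]
      simp
    rw [hgi, hwdef]
    have : c * (d * ∏ j ∈ s.erase i, (i + d - j)) * (c * ∏ j ∈ s.erase i, (i - j)⁻¹)
        = c ^ 2 * d * ∏ j ∈ s.erase i, ((i + d - j) * (i - j)⁻¹) := by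
      rw [Finset.prod_mul_distrib]; ring
    rw [this]
    have hpos : 0 < ∏ j ∈ s.erase i, ((i + d - j) * (i - j)⁻¹) := by
      refine Finset.prod_pos fun j hj => ?_
      obtain ⟨hji, hjs⟩ := Finset.mem_erase.mp hj
      have hdij := hgap i hi j hjs (Ne.symm hji)
      rcases lt_or_gt_of_ne hji with h | h
      · -- j < i
        have h1 : 0 < i + d - j := by linarith
        have h2 : 0 < (i - j)⁻¹ := inv_pos.mpr (by linarith)
        exact mul_pos h1 h2
      · -- j > i
        have habs : |i - j| = j - i := by rw [abs_of_nonpos (by linarith)]; ring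
        rw [habs] at hdij
        have h1 : i + d - j < 0 := by linarith
        have h2 : (i - j)⁻¹ < 0 := inv_lt_zero.mpr (by linarith)
        exact mul_pos_of_neg_of_neg h1 h2
    positivity
  -- strict positivity of the sum
  obtain ⟨i, hi, hqx⟩ : ∃ i ∈ s, ∀ j ∈ s.erase i, x ≠ j := by
    by_cases hx : x ∈ s
    · exact ⟨x, hx, fun j hj h => (Finset.mem_erase.mp hj).1 h.symm⟩
    · obtain ⟨i, hi⟩ := hsne
      exact ⟨i, hi, fun j hj h => hx (h ▸ (Finset.mem_erase.mp hj).2)⟩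
  refine Finset.sum_pos' (fun i hi => ?_) ⟨i, hi, ?_⟩
  · exact mul_nonneg (hmu i hi).le (sq_nonneg _)
  · refine mul_pos (hmu i hi) ?_
    have : (q i).eval x ≠ 0 := by
      rw [hqdef]
      simp only [eval_prod, eval_sub, eval_X, eval_C]
      rw [Finset.prod_ne_zero_iff]
      intro j hj
      exact sub_ne_zero_of_ne (hqx j hj)
    positivity
end

section
/- Let f be a real polynomial with all roots real and simple. Then for every (a,b) ∈ ℝ² with (a,b) ≠ (0,0), the polynomial a·f + b·f′ has all roots real and simple, and sep(a·f + b·f′) ≥ sep(f). -/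
/-!
Write `g = a • f + b • f'`. Laguerre's inequality `f f'' < f' ^ 2` holds everywhere: off the roots
because `(f' / f)' = -∑ 1 / (x - r) ^ 2`, at the roots because they are simple. A common zero of `g`
and `g' = a • f' + b • f''` would make `(f, f')` and `(f', f'')` proportional there, so every root
of `g` is simple. For `b ≠ 0`, Rolle's theorem for `exp (a x / b) f(x)` puts a root of `g` between
any two roots of `f`; thus `g` has at least `deg g - 1` real roots, and so it splits.

At two roots `z < w` of `g` the logarithmic derivative `f' / f = ∑ 1 / (x - r)` takes the same
value `-a / b`, whence `∑ 1 / ((z - r) (w - r)) = 0`. If the roots `r` of `f` were at least `w - z`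
apart, this sum would be positive when no root lies in `(z, w)`, and otherwise the term of the one
root `r₀ ∈ (z, w)` dominates: the terms on either side of `r₀` telescope to less than
`1 / ((w - z) (r₀ - z))` and `1 / ((w - z) (w - r₀))`, which add up to `1 / ((r₀ - z) (w - r₀))`.
-/

open Polynomial

theorem mul_eq_sq_of_mul_add_mul_eq_zero {K : Type*} [Field K] {a b u v w : K}
    (hab : (a, b) ≠ (0, 0)) (h₁ : a * u + b * v = 0) (h₂ : a * v + b * w = 0) : u * w = v ^ 2 := by
  have ha : a * (u * w - v ^ 2) = 0 := by linear_combination w * h₁ - v * h₂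
  have hb : b * (u * w - v ^ 2) = 0 := by linear_combination u * h₂ - v * h₁
  by_contra h
  exact hab (by simp_all [sub_eq_zero])

namespace Polynomial

theorem Splits.of_natDegree_le_card_roots_add_one {K : Type*} [Field K] {p : K[X]}
    (h : p.natDegree ≤ Multiset.card p.roots + 1) : p.Splits := by
  obtain ⟨q, -, hcard, hq⟩ := p.exists_prod_multiset_X_sub_C_mul
  have hq0 : q.natDegree = 0 := by
    have hqs := splits_iff_card_roots.mp (Splits.of_natDegree_le_one (f := q) (by omega))
    simpa [hq] using hqs.symm
  exact splits_iff_card_roots.mpr (by omega)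

theorem nodup_roots_of_isRoot_not_isRoot_derivative {K : Type*} [Field K] {p : K[X]}
    (h : ∀ x, p.IsRoot x → ¬ p.derivative.IsRoot x) : p.roots.Nodup := by
  classical
  rcases eq_or_ne p 0 with rfl | hp
  · simp
  refine Multiset.nodup_iff_count_le_one.mpr fun x => ?_
  rw [count_roots]
  by_contra! hx
  obtain ⟨hpx, hpx'⟩ := (one_lt_rootMultiplicity_iff_isRoot hp).mp hx
  exact h x hpx hpx'

theorem exists_isRoot_smul_add_smul_derivative_mem_Ioo {p : ℝ[X]} (a : ℝ) {b : ℝ}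
    (hb : b ≠ 0) {x y : ℝ} (hxy : x < y) (hx : p.IsRoot x) (hy : p.IsRoot y) :
    ∃ z ∈ Set.Ioo x y, (a • p + b • derivative p).IsRoot z := by
  let H : ℝ → ℝ := fun t => Real.exp (a / b * t) * p.eval t
  have hH : ∀ t,
      HasDerivAt H (Real.exp (a / b * t) / b * (a • p + b • derivative p).eval t) t := by
    intro t
    refine ((((hasDerivAt_id' t).const_mul (a / b)).exp).mul (p.hasDerivAt t)).congr_deriv ?_
    simp only [eval_add, eval_smul, smul_eq_mul]
    field_simp
  obtain ⟨z, hz, hHz⟩ := exists_hasDerivAt_eq_zero hxy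
    (fun t _ => (hH t).continuousAt.continuousWithinAt) (by simp [H, hx.eq_zero, hy.eq_zero])
    fun t _ => hH t
  exact ⟨z, hz, by simpa [hb, Real.exp_ne_zero] using hHz⟩

end Polynomial

namespace Finset

theorem sum_inv_mul_sub_lt_of_ge {x y : ℝ} (hxy : x < y) (S : Finset ℝ) {c : ℝ} (hyc : y < c)
    (hcS : ∀ s ∈ S, c ≤ s) (hsep : ∀ s ∈ S, ∀ t ∈ S, s < t → y - x ≤ t - s) :
    ∑ s ∈ S, ((x - s) * (y - s))⁻¹ < ((y - x) * (c - y))⁻¹ := by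
  classical
  induction S using Finset.induction_on_min generalizing c with
  | empty =>
    rw [sum_empty]
    exact inv_pos.mpr (mul_pos (by linarith) (by linarith))
  | insert m S hmS ih =>
    have hcm : c ≤ m := hcS m (mem_insert_self m S)
    rw [sum_insert fun h => lt_irrefl m (hmS m h)]
    have hrest := ih (c := m + (y - x)) (by linarith)
      (fun s hs => by linarith [hsep m (mem_insert_self m S) s (mem_insert_of_mem hs) (hmS s hs)])
      fun s hs t ht => hsep s (mem_insert_of_mem hs) t (mem_insert_of_mem ht)
    have hxm : x - m ≠ 0 := by linarith
    have hym : y - m ≠ 0 := by linarith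
    have hmx : m - x ≠ 0 := by linarith
    have hmy : m - y ≠ 0 := by linarith
    have hyx : y - x ≠ 0 := by linarith
    calc ((x - m) * (y - m))⁻¹ + ∑ s ∈ S, ((x - s) * (y - s))⁻¹
        < ((x - m) * (y - m))⁻¹ + ((y - x) * (m + (y - x) - y))⁻¹ := by gcongr
      _ = ((y - x) * (m - y))⁻¹ := by rw [show m + (y - x) - y = m - x by ring]; field_simp; ring
      _ ≤ ((y - x) * (c - y))⁻¹ := by gcongr

theorem sum_inv_mul_sub_lt_of_le {x y : ℝ} (hxy : x < y) (S : Finset ℝ) {c : ℝ} (hcx : c < x)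
    (hSc : ∀ s ∈ S, s ≤ c) (hsep : ∀ s ∈ S, ∀ t ∈ S, s < t → y - x ≤ t - s) :
    ∑ s ∈ S, ((x - s) * (y - s))⁻¹ < ((y - x) * (x - c))⁻¹ := by
  have h := sum_inv_mul_sub_lt_of_ge (neg_lt_neg hxy) (S.image Neg.neg) (c := -c) (by linarith)
    (by simpa using hSc)
    (by
      simp only [mem_image]
      rintro _ ⟨s, hs, rfl⟩ _ ⟨t, ht, rfl⟩ hst
      linarith [hsep t ht s hs (neg_lt_neg_iff.mp hst)])
  rw [sum_image fun _ _ _ _ h => neg_injective h] at h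
  convert h using 2 <;> ring

theorem sum_inv_mul_sub_ne_zero {S : Finset ℝ} (hS : S.Nonempty) {z w : ℝ} (hzw : z < w)
    (hz : z ∉ S) (hw : w ∉ S) (hsep : ∀ s ∈ S, ∀ t ∈ S, s < t → w - z ≤ t - s) :
    ∑ s ∈ S, ((z - s) * (w - s))⁻¹ ≠ 0 := by
  by_cases hmid : ∃ r ∈ S, z < r ∧ r < w
  swap
  · push Not at hmid
    refine (sum_pos (fun s hs => inv_pos.mpr ?_) hS).ne'
    rcases lt_or_gt_of_ne (ne_of_mem_of_not_mem hs hz) with hsz | hzs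
    · exact mul_pos (by linarith) (by linarith)
    · have hws : w < s := (hmid s hs hzs).lt_of_ne' (ne_of_mem_of_not_mem hs hw)
      exact mul_pos_of_neg_of_neg (by linarith) (by linarith)
  obtain ⟨r, hr, hzr, hrw⟩ := hmid
  set L := (S.erase r).filter (· < r)
  set R := (S.erase r).filter (¬ · < r)
  have hLS : L ⊆ S := (filter_subset _ _).trans (erase_subset r S)
  have hRS : R ⊆ S := (filter_subset _ _).trans (erase_subset r S)
  have hL := sum_inv_mul_sub_lt_of_le hzw L (c := r - (w - z)) (by linarith) (fun s hs => by
    obtain ⟨hs, hsr⟩ := mem_filter.mp hs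
    linarith [hsep s (mem_of_mem_erase hs) r hr hsr])
    fun s hs t ht => hsep s (hLS hs) t (hLS ht)
  have hR := sum_inv_mul_sub_lt_of_ge hzw R (c := r + (w - z)) (by linarith) (fun s hs => by
    obtain ⟨hs, hsr⟩ := mem_filter.mp hs
    have hrs : r < s := (not_lt.mp hsr).lt_of_ne (ne_of_mem_erase hs).symm
    linarith [hsep r hr s (mem_of_mem_erase hs) hrs])
    fun s hs t ht => hsep s (hRS hs) t (hRS ht)
  rw [show z - (r - (w - z)) = w - r by ring] at hL
  rw [show r + (w - z) - w = r - z by ring] at hR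
  have hzr₀ : z - r ≠ 0 := by linarith
  have hrz₀ : r - z ≠ 0 := by linarith
  have hwr₀ : w - r ≠ 0 := by linarith
  have hwz₀ : w - z ≠ 0 := by linarith
  have hcancel : ((z - r) * (w - r))⁻¹ + ((w - z) * (w - r))⁻¹ + ((w - z) * (r - z))⁻¹ = 0 := by
    field_simp; ring
  apply ne_of_lt
  rw [← add_sum_erase S _ hr, ← sum_filter_add_sum_filter_not (S.erase r) (· < r)]
  linarith

end Finset

theorem le_rootSep_iff {p : ℝ[X]} {c : ENNReal} :
    c ≤ rootSep p ↔ ∀ s t, p.IsRoot s → p.IsRoot t → s ≠ t → c ≤ ENNReal.ofReal |s - t| := by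
  simp only [rootSep, le_iInf_iff]

theorem rootSep_le {p : ℝ[X]} {s t : ℝ} (hs : p.IsRoot s) (ht : p.IsRoot t) (hst : s ≠ t) :
    rootSep p ≤ ENNReal.ofReal |s - t| :=
  iInf₂_le_of_le s t <| iInf₂_le_of_le hs ht <| iInf_le _ hst

theorem rootSep_smul {p : ℝ[X]} {a : ℝ} (ha : a ≠ 0) : rootSep (a • p) = rootSep p := by
  simp only [rootSep, IsRoot.def, eval_smul, smul_eq_mul, mul_eq_zero, ha, false_or]

namespace SimpleRealRoots

variable {p : ℝ[X]}

theorem splits (hp : SimpleRealRoots p) : p.Splits := splits_iff_card_roots.mpr hp.2.1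

theorem smul (hp : SimpleRealRoots p) {a : ℝ} (ha : a ≠ 0) : SimpleRealRoots (a • p) := by
  have h0 : a • p ≠ 0 := smul_ne_zero ha hp.1
  exact ⟨h0, by rw [roots_smul_nonzero _ ha, natDegree_smul _ ha, hp.2.1],
    by rw [roots_smul_nonzero _ ha]; exact hp.2.2⟩

theorem mem_roots_toFinset (hp : SimpleRealRoots p) {x : ℝ} :
    x ∈ p.roots.toFinset ↔ p.IsRoot x := by
  rw [Multiset.mem_toFinset, mem_roots hp.1]

theorem eval_derivative_ne_zero (hp : SimpleRealRoots p) {x : ℝ} (hx : p.IsRoot x) :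
    p.derivative.eval x ≠ 0 := by
  classical
  intro hx'
  have := Multiset.nodup_iff_count_le_one.mp hp.2.2 x
  rw [count_roots] at this
  exact this.not_gt ((one_lt_rootMultiplicity_iff_isRoot hp.1).mpr ⟨hx, hx'⟩)

theorem roots_toFinset_nonempty (hp : SimpleRealRoots p) (hdeg : 0 < p.natDegree) :
    p.roots.toFinset.Nonempty := by
  rw [← Finset.card_pos, Multiset.toFinset_card_of_nodup hp.2.2, hp.2.1]
  exact hdeg

theorem eval_derivative_div_eval (hp : SimpleRealRoots p) {x : ℝ} (hx : p.eval x ≠ 0) :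
    p.derivative.eval x / p.eval x = ∑ z ∈ p.roots.toFinset, (x - z)⁻¹ := by
  rw [hp.splits.eval_derivative_div_eval_of_ne_zero hx, Finset.sum_eq_multiset_sum,
    Multiset.toFinset_val, Multiset.dedup_eq_self.mpr hp.2.2]
  simp only [one_div]

theorem eval_mul_eval_derivative_derivative_lt_sq (hp : SimpleRealRoots p)
    (hdeg : 0 < p.natDegree) (x : ℝ) :
    p.eval x * (derivative (derivative p)).eval x < p.derivative.eval x ^ 2 := by
  by_cases hx : p.eval x = 0
  · rw [hx, zero_mul]
    exact pow_two_pos_of_ne_zero (hp.eval_derivative_ne_zero hx)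
  set S := p.roots.toFinset
  have hxS : ∀ z ∈ S, x - z ≠ 0 := fun z hz =>
    sub_ne_zero.mpr fun h => hx (h ▸ hp.mem_roots_toFinset.mp hz)
  have hquot := (p.derivative.hasDerivAt x).div (p.hasDerivAt x) hx
  have hsum : HasDerivAt (fun y => ∑ z ∈ S, (y - z)⁻¹) (∑ z ∈ S, -1 / (x - z) ^ 2) x :=
    HasDerivAt.fun_sum fun z hz => ((hasDerivAt_id x).sub_const z).inv (hxS z hz)
  have hlogderiv : (fun y => p.derivative.eval y / p.eval y) =ᶠ[nhds x]
      fun y => ∑ z ∈ S, (y - z)⁻¹ := by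
    filter_upwards [p.continuous.continuousAt.eventually_ne hx] with y hy
    exact hp.eval_derivative_div_eval hy
  have hneg : ∑ z ∈ S, -1 / (x - z) ^ 2 < 0 :=
    Finset.sum_neg (fun z hz => div_neg_of_neg_of_pos (by norm_num)
      (pow_two_pos_of_ne_zero (hxS z hz))) (hp.roots_toFinset_nonempty hdeg)
  rw [(hsum.congr_of_eventuallyEq hlogderiv).unique hquot] at hneg
  have := mul_neg_of_neg_of_pos hneg (pow_two_pos_of_ne_zero hx)
  rw [div_mul_cancel₀ _ (pow_ne_zero 2 hx)] at this
  linarith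

theorem not_isRoot_derivative_of_isRoot_smul_add_smul_derivative (hp : SimpleRealRoots p)
    (hdeg : 0 < p.natDegree) {a b : ℝ} (hab : (a, b) ≠ (0, 0)) {x : ℝ}
    (hx : (a • p + b • derivative p).IsRoot x) :
    ¬ (derivative (a • p + b • derivative p)).IsRoot x := by
  intro hx'
  simp only [IsRoot, derivative_add, derivative_smul, eval_add, eval_smul, smul_eq_mul] at hx hx'
  exact (hp.eval_mul_eval_derivative_derivative_lt_sq hdeg x).ne
    (mul_eq_sq_of_mul_add_mul_eq_zero hab hx hx')

theorem smul_add_smul_derivative (hp : SimpleRealRoots p)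
    (hdeg : 0 < p.natDegree) (a : ℝ) {b : ℝ} (hb : b ≠ 0) :
    SimpleRealRoots (a • p + b • derivative p) := by
  set g := a • p + b • derivative p
  have hsimple : ∀ x, g.IsRoot x → ¬ g.derivative.IsRoot x := fun x =>
    hp.not_isRoot_derivative_of_isRoot_smul_add_smul_derivative hdeg (by simp [hb])
  have hg : g ≠ 0 := fun h => hsimple 0 (by simp [h]) (by simp [h])
  have hinterlace : p.roots.toFinset.card ≤ g.roots.toFinset.card + 1 := by
    refine Finset.card_le_of_interleaved fun x hx y hy hxy _ => ?_
    rw [hp.mem_roots_toFinset] at hx hy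
    obtain ⟨z, hz, hgz⟩ := exists_isRoot_smul_add_smul_derivative_mem_Ioo a hb hxy hx hy
    exact ⟨z, Multiset.mem_toFinset.mpr ((mem_roots hg).mpr hgz), hz⟩
  have hgdeg : g.natDegree ≤ p.natDegree :=
    (natDegree_add_le _ _).trans <| max_le (natDegree_smul_le _ _) <|
      (natDegree_smul_le _ _).trans <| (natDegree_derivative_le p).trans (Nat.sub_le _ _)
  refine ⟨hg, splits_iff_card_roots.mp (Splits.of_natDegree_le_card_roots_add_one ?_),
    nodup_roots_of_isRoot_not_isRoot_derivative hsimple⟩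
  calc g.natDegree ≤ p.natDegree := hgdeg
    _ = p.roots.toFinset.card := by rw [Multiset.toFinset_card_of_nodup hp.2.2, hp.2.1]
    _ ≤ g.roots.toFinset.card + 1 := hinterlace
    _ ≤ Multiset.card g.roots + 1 := by gcongr; exact Multiset.toFinset_card_le _

theorem exists_sub_lt_of_isRoot_smul_add_smul_derivative (hp : SimpleRealRoots p)
    (hdeg : 0 < p.natDegree) (a : ℝ) {b : ℝ} (hb : b ≠ 0) {z w : ℝ} (hzw : z < w)
    (hz : (a • p + b • derivative p).IsRoot z) (hw : (a • p + b • derivative p).IsRoot w) :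
    ∃ s t, p.IsRoot s ∧ p.IsRoot t ∧ s < t ∧ t - s < w - z := by
  by_contra! hsep
  set S := p.roots.toFinset
  have hlogderiv : ∀ x, (a • p + b • derivative p).IsRoot x →
      p.eval x ≠ 0 ∧ ∑ s ∈ S, (x - s)⁻¹ = -a / b := by
    intro x hx
    simp only [IsRoot, eval_add, eval_smul, smul_eq_mul] at hx
    have hpx : p.eval x ≠ 0 := fun h => hp.eval_derivative_ne_zero h (by simpa [h, hb] using hx)
    refine ⟨hpx, ?_⟩
    rw [← hp.eval_derivative_div_eval hpx]
    field_simp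
    linarith
  obtain ⟨hz0, hzsum⟩ := hlogderiv z hz
  obtain ⟨hw0, hwsum⟩ := hlogderiv w hw
  refine Finset.sum_inv_mul_sub_ne_zero (hp.roots_toFinset_nonempty hdeg) hzw
    (mt hp.mem_roots_toFinset.mp hz0) (mt hp.mem_roots_toFinset.mp hw0)
    (fun s hs t ht => hsep s t (hp.mem_roots_toFinset.mp hs) (hp.mem_roots_toFinset.mp ht)) ?_
  have hdiff :
      ∑ s ∈ S, ((z - s)⁻¹ - (w - s)⁻¹) = (w - z) * ∑ s ∈ S, ((z - s) * (w - s))⁻¹ := by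
    rw [Finset.mul_sum]
    refine Finset.sum_congr rfl fun s hs => ?_
    have hzs : z - s ≠ 0 := sub_ne_zero.mpr fun h => hz0 (h ▸ hp.mem_roots_toFinset.mp hs)
    have hws : w - s ≠ 0 := sub_ne_zero.mpr fun h => hw0 (h ▸ hp.mem_roots_toFinset.mp hs)
    field_simp
    ring
  rw [Finset.sum_sub_distrib, hzsum, hwsum, sub_self] at hdiff
  exact (mul_eq_zero.mp hdiff.symm).resolve_left (sub_ne_zero.mpr hzw.ne')

theorem rootSep_le_rootSep_smul_add_smul_derivative (hp : SimpleRealRoots p)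
    (hdeg : 0 < p.natDegree) (a : ℝ) {b : ℝ} (hb : b ≠ 0) :
    rootSep p ≤ rootSep (a • p + b • derivative p) := by
  refine le_rootSep_iff.mpr fun z w hz hw hzw => ?_
  wlog hlt : z < w generalizing z w
  · rw [abs_sub_comm]
    exact this w z hw hz hzw.symm (hzw.lt_or_gt.resolve_left hlt)
  obtain ⟨s, t, hs, ht, hst, hts⟩ :=
    hp.exists_sub_lt_of_isRoot_smul_add_smul_derivative hdeg a hb hlt hz hw
  calc rootSep p ≤ ENNReal.ofReal |t - s| := rootSep_le ht hs hst.ne'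
    _ ≤ ENNReal.ofReal |z - w| := by
      refine ENNReal.ofReal_le_ofReal ?_
      rw [abs_of_pos (sub_pos.mpr hst), abs_sub_comm, abs_of_pos (sub_pos.mpr hlt)]
      exact hts.le

end SimpleRealRoots

theorem stmt5 (f : Polynomial ℝ) (hf : SimpleRealRoots f) (hnc : 0 < f.natDegree) :
    ∀ a b : ℝ, (a, b) ≠ (0, 0) →
      SimpleRealRoots (a • f + b • Polynomial.derivative f) ∧
      rootSep f ≤ rootSep (a • f + b • Polynomial.derivative f) := by
  intro a b hab
  rcases eq_or_ne b 0 with rfl | hb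
  · have ha : a ≠ 0 := by rintro rfl; exact hab rfl
    rw [zero_smul, add_zero, rootSep_smul ha]
    exact ⟨hf.smul ha, le_rfl⟩
  · exact ⟨hf.smul_add_smul_derivative hnc a hb,
      hf.rootSep_le_rootSep_smul_add_smul_derivative hnc a hb⟩
end

section
/- Let t₁ < t₂ < … < tₙ be real numbers with tᵢ₊₁ − tᵢ > m for all i, where m > 0, and let f(x) = ∏ᵢ(x − tᵢ). Then the polynomial g(x) = f(x) − f(x+m) has degree exactly n−1 and has n−1 distinct real roots r₁ < … < r_{n−1} satisfying tᵢ < rᵢ < tᵢ₊₁ and rᵢ₊₁ − rᵢ > m for all i. -/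
open Polynomial Finset

private lemma aux_card (n k : ℕ) : (univ.filter fun j : Fin n => k ≤ (j:ℕ)).card = n - k := by
  have h1 : (univ.filter fun j : Fin n => k ≤ (j:ℕ)).card
      = ((Finset.range n).filter fun j => k ≤ j).card := by
    rw [Finset.card_filter, Finset.card_filter,
      ← Fin.sum_univ_eq_sum_range (fun j => if k ≤ j then 1 else 0)]
  rw [h1, Finset.range_eq_Ico, Finset.Ico_filter_le, Nat.card_Ico, Nat.max_eq_right (Nat.zero_le k)]

private lemma aux_sign (n : ℕ) (t : Fin n → ℝ) (x : ℝ) (k : ℕ)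
    (h1 : ∀ j : Fin n, (j:ℕ) < k → t j < x) (h2 : ∀ j : Fin n, k ≤ (j:ℕ) → x < t j) :
    0 < (-1:ℝ)^(n-k) * (∏ i : Fin n, (X - C (t i))).eval x := by
  have hev : (∏ i : Fin n, (X - C (t i))).eval x = ∏ i : Fin n, (x - t i) := by
    simp [eval_prod]
  rw [hev, ← Finset.prod_filter_mul_prod_filter_not univ (fun j : Fin n => k ≤ (j:ℕ))
    (fun i => x - t i), ← mul_assoc]
  have key : (-1:ℝ)^(n-k) * (∏ j ∈ univ.filter (fun j : Fin n => k ≤ (j:ℕ)), (x - t j))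
      = ∏ j ∈ univ.filter (fun j : Fin n => k ≤ (j:ℕ)), (t j - x) := by
    rw [← aux_card n k, ← Finset.prod_const (-1:ℝ), ← Finset.prod_mul_distrib]
    exact Finset.prod_congr rfl fun j _ => by ring
  rw [key]
  apply mul_pos
  · apply Finset.prod_pos
    intro j hj
    have := (Finset.mem_filter.mp hj).2
    have := h2 j this
    linarith
  · apply Finset.prod_pos
    intro j hj
    have := (Finset.mem_filter.mp hj).2
    have := h1 j (by omega)
    linarith

private lemma aux_exists (n : ℕ) (m : ℝ) (hm : 0 < m) (t : Fin n → ℝ) (ht : StrictMono t)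
    (hgap : ∀ i j : Fin n, (j : ℕ) = (i : ℕ) + 1 → m < t j - t i)
    (f : Polynomial ℝ) (hfdef : f = ∏ i : Fin n, (X - C (t i)))
    (k : ℕ) (hk : k + 1 < n) :
    ∃ r : ℝ, t ⟨k, Nat.lt_of_succ_lt hk⟩ < r ∧ r + m < t ⟨k+1, hk⟩ ∧
      (f - f.comp (X + C m)).eval r = 0 := by
  set a := t ⟨k, Nat.lt_of_succ_lt hk⟩ with ha
  set b := t ⟨k+1, hk⟩ with hb
  have hroot : ∀ j : Fin n, f.eval (t j) = 0 := by
    intro j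
    rw [hfdef, eval_prod]
    apply Finset.prod_eq_zero (Finset.mem_univ j)
    simp
  have hgapab : m < b - a := hgap _ _ rfl
  have hsI : ∀ x, a < x → x < b → 0 < (-1:ℝ)^(n-(k+1)) * f.eval x := by
    intro x hax hxb
    rw [hfdef]
    apply aux_sign n t x (k+1)
    · intro j hj
      have : t j ≤ a := ht.monotone (by simp [Fin.le_def]; omega)
      linarith
    · intro j hj
      have : b ≤ t j := ht.monotone (by simp [Fin.le_def]; omega)
      linarith
  have hsO : ∀ x, b < x → (∀ j : Fin n, k+2 ≤ (j:ℕ) → x < t j) →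
      0 < (-1:ℝ)^(n-(k+2)) * f.eval x := by
    intro x hbx hx
    rw [hfdef]
    apply aux_sign n t x (k+2)
    · intro j hj
      have : t j ≤ b := ht.monotone (by simp [Fin.le_def]; omega)
      linarith
    · exact hx
  have hbound : ∀ y, y ≤ b → ∀ j : Fin n, k+2 ≤ (j:ℕ) → y + m < t j := by
    intro y hy j hj
    have hkn : k + 2 < n := lt_of_le_of_lt hj j.isLt
    have h2 : m < t ⟨k+2, hkn⟩ - t ⟨k+1, hk⟩ := hgap _ _ rfl
    have h3 : t ⟨k+2, hkn⟩ ≤ t j := ht.monotone (by simp [Fin.le_def]; omega)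
    linarith
  have hpow : (-1:ℝ)^(n-(k+1)) = -(-1:ℝ)^(n-(k+2)) := by
    have h : n - (k+1) = (n - (k+2)) + 1 := by omega
    rw [h, pow_succ]; ring
  set G : ℝ → ℝ := fun x => (-1:ℝ)^(n-(k+2)) * (f - f.comp (X + C m)).eval x with hG
  have hevG : ∀ x, G x = (-1:ℝ)^(n-(k+2)) * (f.eval x - f.eval (x + m)) := by
    intro x; simp [hG, eval_comp]
  have hA : f.eval a = 0 := by rw [ha]; exact hroot _
  have hB : f.eval b = 0 := by rw [hb]; exact hroot _
  have hGa : 0 < G a := by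
    have h1 : 0 < (-1:ℝ)^(n-(k+1)) * f.eval (a + m) := by
      apply hsI _ (by linarith) (by linarith)
    rw [hpow] at h1
    have h2 : G a = -((-1:ℝ)^(n-(k+2)) * f.eval (a + m)) := by rw [hevG, hA]; ring
    rw [h2]; linarith
  have hGb : G b < 0 := by
    have h1 : 0 < (-1:ℝ)^(n-(k+2)) * f.eval (b + m) := by
      apply hsO _ (by linarith) (hbound b le_rfl)
    have h2 : G b = -((-1:ℝ)^(n-(k+2)) * f.eval (b + m)) := by rw [hevG, hB]; ring
    rw [h2]; linarith
  have hab : a ≤ b := by linarith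
  have hcont : Continuous G := continuous_const.mul (f - f.comp (X + C m)).continuous
  have hsub := intermediate_value_Ioo' hab hcont.continuousOn
  obtain ⟨r, hr, hGr⟩ := hsub ⟨hGb, hGa⟩
  have hg0 : (f - f.comp (X + C m)).eval r = 0 := by
    rcases mul_eq_zero.mp hGr with h | h
    · exact absurd h (pow_ne_zero _ (by norm_num))
    · exact h
  have heq : f.eval r = f.eval (r + m) := by
    have h := hg0
    simp only [eval_sub, eval_comp, eval_add, eval_X, eval_C] at h
    linarith
  have hfr : 0 < (-1:ℝ)^(n-(k+1)) * f.eval r := hsI r hr.1 hr.2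
  have hrb : r + m < b := by
    by_contra h
    push_neg at h
    rcases eq_or_lt_of_le h with h' | h'
    · rw [heq, ← h', hB] at hfr
      simp at hfr
    · have hout := hsO (r + m) h' (hbound r (le_of_lt hr.2))
      rw [← heq] at hout
      rw [hpow] at hfr
      linarith
  exact ⟨r, hr.1, hrb, hg0⟩

theorem stmt8 (n : ℕ) (hn : 0 < n) (m : ℝ) (hm : 0 < m)
    (t : Fin n → ℝ) (ht : StrictMono t)
    (hgap : ∀ i j : Fin n, (j : ℕ) = (i : ℕ) + 1 → m < t j - t i)
    (f g : Polynomial ℝ)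
    (hfdef : f = ∏ i : Fin n, (Polynomial.X - Polynomial.C (t i)))
    (hgdef : g = f - f.comp (Polynomial.X + Polynomial.C m)) :
    g ≠ 0 ∧ g.natDegree = n - 1 ∧ g.roots.card = n - 1 ∧ g.roots.Nodup ∧
    ∃ r : Fin (n - 1) → ℝ, StrictMono r ∧
      (∀ x : ℝ, g.IsRoot x ↔ ∃ i, r i = x) ∧
      (∀ i : Fin (n - 1),
        t (Fin.castLE (by omega) i) < r i ∧ r i < t (Fin.cast (by omega) i.succ)) ∧
      (∀ i j : Fin (n - 1), (j : ℕ) = (i : ℕ) + 1 → m < r j - r i) := by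
  have hcomp : f.comp (X + C m) = ∏ i : Fin n, (X - C (t i - m)) := by
    rw [hfdef, Polynomial.prod_comp]
    refine Finset.prod_congr rfl fun i _ => ?_
    rw [sub_comp, X_comp, C_comp, C_sub]
    ring
  have hfmonic : f.Monic := hfdef ▸ monic_prod_of_monic _ _ fun i _ => monic_X_sub_C _
  have hf2monic : (f.comp (X + C m)).Monic :=
    hcomp ▸ monic_prod_of_monic _ _ fun i _ => monic_X_sub_C _
  have hfdeg : f.natDegree = n := by
    rw [hfdef, natDegree_prod_of_monic _ _ fun i _ => monic_X_sub_C _]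
    simp only [natDegree_X_sub_C, Finset.sum_const, Finset.card_univ, Fintype.card_fin,
      smul_eq_mul, mul_one]
  have hf2deg : (f.comp (X + C m)).natDegree = n := by
    rw [hcomp, natDegree_prod_of_monic _ _ fun i _ => monic_X_sub_C _]
    simp only [natDegree_X_sub_C, Finset.sum_const, Finset.card_univ, Fintype.card_fin,
      smul_eq_mul, mul_one]
  have hnext : f.coeff (n-1) = -∑ i : Fin n, t i := by
    have h0 : 0 < f.natDegree := hfdeg ▸ hn
    have h := nextCoeff_of_natDegree_pos h0
    rw [hfdeg] at h
    rw [← h, hfdef, prod_X_sub_C_nextCoeff]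
  have hnext2 : (f.comp (X + C m)).coeff (n-1) = -∑ i : Fin n, (t i - m) := by
    have h0 : 0 < (f.comp (X + C m)).natDegree := hf2deg ▸ hn
    have h := nextCoeff_of_natDegree_pos h0
    rw [hf2deg] at h
    rw [← h, hcomp, prod_X_sub_C_nextCoeff]
  have hgcoeff : g.coeff (n-1) = -((n:ℝ) * m) := by
    rw [hgdef, coeff_sub, hnext, hnext2, Finset.sum_sub_distrib]
    simp only [Finset.sum_const, Finset.card_univ, Fintype.card_fin, smul_eq_mul, mul_one,
      nsmul_eq_mul]
    ring
  have hcoeffne : g.coeff (n-1) ≠ 0 := by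
    rw [hgcoeff]
    have h1 : (1:ℝ) ≤ (n:ℝ) := by exact_mod_cast hn
    nlinarith
  have hgne : g ≠ 0 := fun h => hcoeffne (by rw [h]; simp)
  have hdeglt : g.degree < n := by
    rw [hgdef]
    calc (f - f.comp (X + C m)).degree < f.degree := by
          apply degree_sub_lt
          · rw [degree_eq_natDegree hfmonic.ne_zero, degree_eq_natDegree hf2monic.ne_zero,
              hfdeg, hf2deg]
          · exact hfmonic.ne_zero
          · rw [hfmonic.leadingCoeff, hf2monic.leadingCoeff]
      _ ≤ n := by rw [degree_eq_natDegree hfmonic.ne_zero, hfdeg]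
  have hgnat : g.natDegree = n - 1 := by
    have hle : g.natDegree < n := (natDegree_lt_iff_degree_lt hgne).mpr hdeglt
    have hge : n - 1 ≤ g.natDegree := le_natDegree_of_ne_zero hcoeffne
    omega
  have H : ∀ i : Fin (n-1), ∃ r : ℝ,
      t ⟨(i:ℕ), Nat.lt_of_lt_of_le i.isLt (Nat.sub_le n 1)⟩ < r ∧
      r + m < t ⟨(i:ℕ)+1, Nat.add_lt_of_lt_sub i.isLt⟩ ∧ g.eval r = 0 := by
    intro i
    obtain ⟨r, h1, h2, h3⟩ := aux_exists n m hm t ht hgap f hfdef (i:ℕ)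
      (Nat.add_lt_of_lt_sub i.isLt)
    exact ⟨r, h1, h2, by rw [hgdef]; exact h3⟩
  choose r hr1 hr2 hr3 using H
  have hrmono : StrictMono r := by
    intro i j hij
    have hij' : (i:ℕ) + 1 ≤ (j:ℕ) := hij
    have h1 : t ⟨(i:ℕ)+1, Nat.add_lt_of_lt_sub i.isLt⟩
        ≤ t ⟨(j:ℕ), Nat.lt_of_lt_of_le j.isLt (Nat.sub_le n 1)⟩ :=
      ht.monotone (by simp [Fin.le_def]; omega)
    have := hr2 i
    have := hr1 j
    linarith
  have hrinj := hrmono.injective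
  have hcardS : (Finset.image r univ).card = n - 1 := by
    rw [Finset.card_image_of_injective _ hrinj, Finset.card_univ, Fintype.card_fin]
  have hS : (Finset.image r univ).val ≤ g.roots := by
    rw [Multiset.le_iff_count]
    intro x
    by_cases hx : x ∈ Finset.image r univ
    · rw [Multiset.count_eq_one_of_mem (Finset.nodup _) hx]
      rw [Nat.one_le_iff_ne_zero, ← Nat.pos_iff_ne_zero, Multiset.count_pos]
      obtain ⟨i, _, rfl⟩ := Finset.mem_image.mp hx
      exact mem_roots'.mpr ⟨hgne, hr3 i⟩
    · rw [Multiset.count_eq_zero_of_notMem hx]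
      exact Nat.zero_le _
  have hroots_le : g.roots.card ≤ n - 1 := hgnat ▸ card_roots' g
  have hroots_eq : g.roots = (Finset.image r univ).val := by
    refine (Multiset.eq_of_le_of_card_le hS ?_).symm
    rw [show (Finset.image r univ).val.card = (Finset.image r univ).card from rfl, hcardS]
    exact hroots_le
  refine ⟨hgne, hgnat, by rw [hroots_eq]; exact hcardS, by rw [hroots_eq]; exact Finset.nodup _,
    r, hrmono, ?_, ?_, ?_⟩
  · intro x
    constructor
    · intro hx
      have : x ∈ g.roots := mem_roots'.mpr ⟨hgne, hx⟩
      rw [hroots_eq] at this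
      obtain ⟨i, _, hi⟩ := Finset.mem_image.mp (Finset.mem_val.mp this)
      exact ⟨i, hi⟩
    · rintro ⟨i, rfl⟩
      exact hr3 i
  · intro i
    constructor
    · exact hr1 i
    · have := hr2 i
      have he : t (Fin.cast (by omega) i.succ)
          = t ⟨(i:ℕ)+1, Nat.add_lt_of_lt_sub i.isLt⟩ := by
        congr 1
      linarith
  · intro i j hji
    have he : t ⟨(i:ℕ)+1, Nat.add_lt_of_lt_sub i.isLt⟩
        = t ⟨(j:ℕ), Nat.lt_of_lt_of_le j.isLt (Nat.sub_le n 1)⟩ := by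
      congr 1
      exact Fin.ext hji.symm
    have h2 := hr2 i
    have h1 := hr1 j
    rw [he] at h2
    linarith
end

section
/- Let t₁ < t₂ < … < tₙ be real numbers and let a = (a₁, …, aₙ) ∈ ℝⁿ be nonzero. Then the following are equivalent: (1) for every choice of real numbers s₁ < s₂ < … < sₙ with sᵢ < tᵢ < sᵢ₊₁ for all i (where s_{n+1} := +∞), one has Σ_{i=1}^{n} (−1)^i aᵢ ∏_{j=1}^{n} (tᵢ − sⱼ) ≠ 0; (2) either aᵢ ≥ 0 for all i, or aᵢ ≤ 0 for all i. -/
open Finset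

lemma sign_prod_aux (n : ℕ) (i : Fin n) (w : Fin n → ℝ)
    (hpos : ∀ j : Fin n, (j:ℕ) ≤ (i:ℕ) → 0 < w j)
    (hneg : ∀ j : Fin n, (i:ℕ) < (j:ℕ) → w j < 0) :
    0 < (-1:ℝ)^n * ((-1:ℝ)^((i:ℕ)+1) * ∏ j, w j) := by
  have hsplit : (Finset.univ : Finset (Fin n)) = Finset.Iic i ∪ Finset.Ioi i := by
    ext j; simp [le_or_gt]
  have hdisj : Disjoint (Finset.Iic i) (Finset.Ioi i) := by
    rw [Finset.disjoint_left]
    intro j hj hj'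
    exact absurd (Finset.mem_Ioi.1 hj') (not_lt.2 (Finset.mem_Iic.1 hj))
  have hprod : ∏ j, w j = (∏ j ∈ Finset.Iic i, w j) * ∏ j ∈ Finset.Ioi i, w j := by
    rw [hsplit, Finset.prod_union hdisj]
  have hA : 0 < ∏ j ∈ Finset.Iic i, w j :=
    Finset.prod_pos fun j hj => hpos j (Fin.le_def.mp (Finset.mem_Iic.1 hj))
  have hBneg : 0 < ∏ j ∈ Finset.Ioi i, (-(w j)) :=
    Finset.prod_pos fun j hj => by
      have := hneg j (Fin.lt_def.mp (Finset.mem_Ioi.1 hj)); linarith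
  have hB : ∏ j ∈ Finset.Ioi i, (-(w j)) = (-1:ℝ)^(Finset.Ioi i).card * ∏ j ∈ Finset.Ioi i, w j := by
    calc ∏ j ∈ Finset.Ioi i, (-(w j)) = ∏ j ∈ Finset.Ioi i, ((-1) * w j) := by
          apply Finset.prod_congr rfl; intros; ring
      _ = (∏ _j ∈ Finset.Ioi i, (-1:ℝ)) * ∏ j ∈ Finset.Ioi i, w j := Finset.prod_mul_distrib
      _ = (-1:ℝ)^(Finset.Ioi i).card * ∏ j ∈ Finset.Ioi i, w j := by rw [Finset.prod_const]
  have hcard : (Finset.Ioi i).card = n - 1 - (i:ℕ) := Fin.card_Ioi i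
  have hin : (i:ℕ) < n := i.isLt
  have hexp : n + ((i:ℕ)+1) = 2*((i:ℕ)+1) + (n - 1 - (i:ℕ)) := by omega
  have key : (-1:ℝ)^n * (-1:ℝ)^((i:ℕ)+1) = (-1:ℝ)^((Finset.Ioi i).card) := by
    rw [← pow_add, hexp, hcard, pow_add, pow_mul]
    norm_num
  calc (0:ℝ) < (∏ j ∈ Finset.Iic i, w j) * ∏ j ∈ Finset.Ioi i, (-(w j)) := mul_pos hA hBneg
    _ = (-1:ℝ)^n * ((-1:ℝ)^((i:ℕ)+1) * ∏ j, w j) := by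
        rw [hB, hprod, ← mul_assoc, ← key]; ring

noncomputable def Gsum (n : ℕ) (t a : Fin n → ℝ) (s : Fin n → ℝ) : ℝ :=
  ∑ i : Fin n, (-1:ℝ)^((i:ℕ)+1) * a i * ∏ j : Fin n, (t i - s j)

lemma Gsum_cont (n : ℕ) (t a : Fin n → ℝ) : Continuous (Gsum n t a) := by
  apply continuous_finset_sum
  intro i _
  exact continuous_const.mul (continuous_finset_prod _ fun j _ =>
    continuous_const.sub (continuous_apply j))

/-- On the interlacing region, `(-1)^n * Gsum = ∑ a i * P i` with `P i > 0`. -/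
lemma Gsum_region (n : ℕ) (t a s : Fin n → ℝ)
    (H1 : ∀ i j : Fin n, (j:ℕ) ≤ (i:ℕ) → s j < t i)
    (H2 : ∀ i j : Fin n, (i:ℕ) < (j:ℕ) → t i < s j) :
    ∃ P : Fin n → ℝ, (∀ i, 0 < P i) ∧
      (-1:ℝ)^n * Gsum n t a s = ∑ i : Fin n, a i * P i := by
  refine ⟨fun i => (-1:ℝ)^n * ((-1:ℝ)^((i:ℕ)+1) * ∏ j, (t i - s j)), fun i => ?_, ?_⟩
  · exact sign_prod_aux n i _ (fun j hj => sub_pos.2 (H1 i j hj))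
      (fun j hj => sub_neg.2 (H2 i j hj))
  · rw [Gsum, Finset.mul_sum]
    apply Finset.sum_congr rfl
    intro i _; ring

theorem stmt10 (n : ℕ) (t : Fin n → ℝ) (ht : StrictMono t)
    (a : Fin n → ℝ) (ha : a ≠ 0) :
    (∀ s : Fin n → ℝ, StrictMono s → (∀ i, s i < t i) →
        (∀ i j : Fin n, (j : ℕ) = (i : ℕ) + 1 → t i < s j) →
        ∑ i : Fin n, (-1 : ℝ) ^ ((i : ℕ) + 1) * a i * ∏ j : Fin n, (t i - s j) ≠ 0) ↔
      ((∀ i, 0 ≤ a i) ∨ ∀ i, a i ≤ 0) := by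
  have hn : 0 < n := by
    rcases Nat.eq_zero_or_pos n with h | h
    · subst h; exact absurd (funext fun i => i.elim0) ha
    · exact h
  constructor
  · -- (1) → (2), by contradiction
    intro h
    by_contra hc
    push_neg at hc
    obtain ⟨⟨q, hq⟩, ⟨p, hp⟩⟩ := hc
    -- gaps
    set d : Fin n → ℝ := fun j =>
      if h : (j:ℕ) = 0 then 1 else t j - t ⟨(j:ℕ)-1, by omega⟩ with hd_def
    have hd : ∀ j, 0 < d j := by
      intro j
      rw [hd_def]
      dsimp only
      split
      · norm_num
      · next h0 =>
        exact sub_pos.2 (ht (by rw [Fin.lt_def]; simp; omega))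
    have hd' : ∀ i j : Fin n, (i:ℕ) < (j:ℕ) → t i ≤ t j - d j := by
      intro i j hij
      have hj0 : (j:ℕ) ≠ 0 := by omega
      rw [hd_def]
      dsimp only
      rw [dif_neg hj0]
      have : t i ≤ t ⟨(j:ℕ)-1, by omega⟩ := ht.monotone (by rw [Fin.le_def]; simp; omega)
      linarith
    -- family of near-boundary points
    set X : Fin n → ℝ → Fin n → ℝ :=
      fun r ε j => if j = r then t r - d r / 2 else t j - ε with hX_def
    have hXcont : ∀ r : Fin n, Continuous fun ε => X r ε := by
      intro r
      apply continuous_pi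
      intro j
      by_cases hjr : j = r
      · simp only [hX_def, hjr, if_pos rfl]; exact continuous_const
      · simp only [hX_def, if_neg hjr]; exact continuous_const.sub continuous_id
    -- value at the boundary point
    have hbnd : ∀ r : Fin n, ∃ P : ℝ, 0 < P ∧ (-1:ℝ)^n * Gsum n t a (X r 0) = a r * P := by
      intro r
      have hval : Gsum n t a (X r 0)
          = (-1:ℝ)^((r:ℕ)+1) * a r * ∏ j, (t r - X r 0 j) := by
        apply Finset.sum_eq_single_of_mem r (Finset.mem_univ r)
        intro i _ hir
        have hzero : ∏ j, (t i - X r 0 j) = 0 :=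
          Finset.prod_eq_zero (Finset.mem_univ i) (by simp [hX_def, hir])
        rw [hzero, mul_zero]
      have hsgn := sign_prod_aux n r (fun j => t r - X r 0 j)
        (fun j hj => by
          by_cases hjr : j = r
          · subst hjr
            simp only [hX_def, if_pos rfl]
            have := hd j; linarith
          · simp only [hX_def, if_neg hjr, sub_zero]
            have hlt : (j:ℕ) < (r:ℕ) := lt_of_le_of_ne hj (fun hh => hjr (Fin.ext hh))
            have := ht (show j < r from Fin.lt_def.mpr hlt)
            linarith)
        (fun j hj => by
          have hjr : j ≠ r := by
            intro hh; subst hh; exact absurd hj (lt_irrefl _)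
          simp only [hX_def, if_neg hjr, sub_zero]
          have := ht (show r < j from Fin.lt_def.mpr hj)
          linarith)
      exact ⟨_, hsgn, by rw [hval]; ring⟩
    -- bound for ε
    haveI : Nonempty (Fin n) := ⟨⟨0, hn⟩⟩
    set εm : ℝ := Finset.univ.inf' Finset.univ_nonempty d with hεm_def
    have hεm : 0 < εm := by
      rw [hεm_def, Finset.lt_inf'_iff]
      exact fun j _ => hd j
    have hεm_le : ∀ j, εm ≤ d j := fun j => Finset.inf'_le _ (Finset.mem_univ j)
    -- tendsto
    have htend : ∀ r : Fin n, Filter.Tendsto (fun ε => (-1:ℝ)^n * Gsum n t a (X r ε))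
        (nhdsWithin 0 (Set.Ioi 0)) (nhds ((-1:ℝ)^n * Gsum n t a (X r 0))) := by
      intro r
      exact ((continuous_const.mul ((Gsum_cont n t a).comp (hXcont r))).tendsto 0).mono_left
        nhdsWithin_le_nhds
    have hIoo : ∀ᶠ ε in nhdsWithin (0:ℝ) (Set.Ioi 0), ε ∈ Set.Ioo (0:ℝ) εm :=
      Filter.eventually_mem_set.2 (Ioo_mem_nhdsGT_of_mem ⟨le_refl 0, hεm⟩)
    -- point with positive value
    obtain ⟨Pp, hPp, hPpeq⟩ := hbnd p
    have hLp : 0 < (-1:ℝ)^n * Gsum n t a (X p 0) := by rw [hPpeq]; exact mul_pos hp hPp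
    obtain ⟨εp, h1p, h2p⟩ :=
      (((htend p).eventually (eventually_gt_nhds hLp)).and hIoo).exists
    -- point with negative value
    obtain ⟨Pq, hPq, hPqeq⟩ := hbnd q
    have hLq : (-1:ℝ)^n * Gsum n t a (X q 0) < 0 := by
      rw [hPqeq]; exact mul_neg_of_neg_of_pos hq hPq
    obtain ⟨εq, h1q, h2q⟩ :=
      (((htend q).eventually (eventually_lt_nhds hLq)).and hIoo).exists
    set x : Fin n → ℝ := X p εp with hx_def
    set y : Fin n → ℝ := X q εq with hy_def
    have hxb : ∀ j, t j - d j < x j ∧ x j < t j := by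
      intro j
      rw [hx_def, hX_def]
      dsimp only
      by_cases hjp : j = p
      · subst hjp; rw [if_pos rfl]
        constructor <;> [linarith [hd j]; linarith [hd j]]
      · rw [if_neg hjp]
        obtain ⟨hε0, hεlt⟩ := h2p
        have := hεm_le j
        constructor <;> linarith
    have hyb : ∀ j, t j - d j < y j ∧ y j < t j := by
      intro j
      rw [hy_def, hX_def]
      dsimp only
      by_cases hjq : j = q
      · subst hjq; rw [if_pos rfl]
        constructor <;> [linarith [hd j]; linarith [hd j]]
      · rw [if_neg hjq]
        obtain ⟨hε0, hεlt⟩ := h2q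
        have := hεm_le j
        constructor <;> linarith
    -- segment
    set z : ℝ → Fin n → ℝ := fun u j => (1-u) * x j + u * y j with hz_def
    have hzb : ∀ u, 0 ≤ u → u ≤ 1 → ∀ j, t j - d j < z u j ∧ z u j < t j := by
      intro u h0 h1 j
      obtain ⟨hx1, hx2⟩ := hxb j
      obtain ⟨hy1, hy2⟩ := hyb j
      rw [hz_def]
      dsimp only
      rcases le_total (x j) (y j) with hc | hc <;>
        constructor <;>
        nlinarith [mul_nonneg h0 (sub_nonneg.2 hc),
          mul_nonneg (sub_nonneg.2 h1) (sub_nonneg.2 hc)]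
    have hzcont : Continuous fun u => Gsum n t a (z u) := by
      apply (Gsum_cont n t a).comp
      apply continuous_pi
      intro j
      exact ((continuous_const.sub continuous_id).mul continuous_const).add
        (continuous_id.mul continuous_const)
    have hz0 : z 0 = x := by funext j; rw [hz_def]; dsimp only; ring
    have hz1 : z 1 = y := by funext j; rw [hz_def]; dsimp only; ring
    have hg0 : 0 < (-1:ℝ)^n * Gsum n t a (z 0) := by rw [hz0]; exact h1p
    have hg1 : (-1:ℝ)^n * Gsum n t a (z 1) < 0 := by rw [hz1]; exact h1q
    have hmem : (0:ℝ) ∈ Set.uIcc (Gsum n t a (z 0)) (Gsum n t a (z 1)) := by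
      rcases neg_one_pow_eq_or ℝ n with hrw | hrw <;> rw [hrw] at hg0 hg1
      · rw [one_mul] at hg0 hg1
        exact Set.mem_uIcc.2 (Or.inr ⟨le_of_lt hg1, le_of_lt hg0⟩)
      · have hg0' : Gsum n t a (z 0) < 0 := by linarith
        have hg1' : 0 < Gsum n t a (z 1) := by linarith
        exact Set.mem_uIcc.2 (Or.inl ⟨le_of_lt hg0', le_of_lt hg1'⟩)
    obtain ⟨u, hu, hgu⟩ := intermediate_value_uIcc (hzcont.continuousOn) hmem
    rw [Set.uIcc_of_le (zero_le_one)] at hu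
    have hub := hzb u hu.1 hu.2
    -- z u is a valid interlacing sequence
    have hlt : ∀ i, z u i < t i := fun i => (hub i).2
    have hmid : ∀ i j : Fin n, (i:ℕ) < (j:ℕ) → t i < z u j := by
      intro i j hij
      have := hd' i j hij
      have := (hub j).1
      linarith
    have hmono : StrictMono (z u) := by
      intro i j hij
      have hij' : (i:ℕ) < (j:ℕ) := Fin.lt_def.mp hij
      exact lt_trans (hlt i) (hmid i j hij')
    have hadj : ∀ i j : Fin n, (j:ℕ) = (i:ℕ)+1 → t i < z u j := by
      intro i j hj
      exact hmid i j (by omega)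
    exact h (z u) hmono hlt hadj hgu
  · -- (2) → (1)
    intro hsgn s hs hst hts hzero
    have H1 : ∀ i j : Fin n, (j:ℕ) ≤ (i:ℕ) → s j < t i := by
      intro i j hj
      exact lt_of_le_of_lt (hs.monotone (Fin.le_def.mpr hj)) (hst i)
    have H2 : ∀ i j : Fin n, (i:ℕ) < (j:ℕ) → t i < s j := by
      intro i j hij
      have hi1 : (i:ℕ)+1 < n := lt_of_le_of_lt hij j.isLt
      have h1 := hts i ⟨(i:ℕ)+1, hi1⟩ rfl
      have h2 : s ⟨(i:ℕ)+1, hi1⟩ ≤ s j := hs.monotone (Fin.le_def.mpr (by simp; omega))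
      linarith
    obtain ⟨P, hP, hPeq⟩ := Gsum_region n t a s H1 H2
    have hzero' : ∑ i : Fin n, a i * P i = 0 := by
      rw [← hPeq, show Gsum n t a s = 0 from hzero, mul_zero]
    obtain ⟨k, hk⟩ := Function.ne_iff.mp ha
    have hk' : a k ≠ 0 := by simpa using hk
    rcases hsgn with hall | hall
    · have hpos : 0 < ∑ i : Fin n, a i * P i := by
        apply Finset.sum_pos' (fun i _ => mul_nonneg (hall i) (le_of_lt (hP i)))
        exact ⟨k, Finset.mem_univ k, mul_pos (lt_of_le_of_ne (hall k) (Ne.symm hk')) (hP k)⟩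
      linarith
    · have hneg : 0 < ∑ i : Fin n, -(a i * P i) := by
        apply Finset.sum_pos' (fun i _ => by
          have := mul_nonpos_of_nonpos_of_nonneg (hall i) (le_of_lt (hP i)); linarith)
        refine ⟨k, Finset.mem_univ k, ?_⟩
        have : a k < 0 := lt_of_le_of_ne (hall k) hk'
        have := mul_neg_of_neg_of_pos this (hP k)
        linarith
      rw [Finset.sum_neg_distrib] at hneg
      linarith
end

section
/- Let Q be a nondegenerate real quadratic form of signature (2, ρ−2) on ℝ^ρ with ρ ≥ 3, and let Q* be the dual quadratic form on (ℝ^ρ)*. For a nonzero linear functional f on ℝ^ρ, the restriction of Q to Ker f has signature (1, ρ−2) if and only if Q*(f) > 0. -/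
/-!
Signatures are compared through `sigPos`/`sigNeg` and Sylvester's law of inertia. The kernel `K`
of `f = B(w, ·)`, with `B` the polar form of `Q`, is the `Q`-orthogonal complement of `w`, so
`Q (k + s • w) = Q k + s² Q w` for `k ∈ K`. If `Q w > 0`, adjoining `w` to a positive-definite
subspace of `K` gives one for `Q`, so `Q|K` has positive index at most `1` and negative index at
most `ρ - 2`; it is nondegenerate (its radical is `Q`-orthogonal to `K` and to `w`, which span the
space), so the indices add up to `dim K = ρ - 1` and equal `(1, ρ - 2)`. If `Q w ≤ 0` while `Q|K`
has a negative-definite subspace `N` of dimension `ρ - 2`, then `Q ≤ 0` on `N ⊕ ℝ w`, a subspace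
of dimension `ρ - 1`, which cannot coexist with the two positive directions of `Q`.
-/

/-- A real-valued map `Q` on a real vector space `M` has signature `(p, q)` if there is a
basis in which `Q` is the corresponding signed sum of squares of coordinates
(`p` positive and `q` negative eigenvalues). -/
def HasSignature {M : Type*} [AddCommGroup M] [Module ℝ M] (Q : M → ℝ) (p q : ℕ) : Prop :=
  ∃ b : Module.Basis (Fin (p + q)) ℝ M,
    ∀ v : M, Q v = ∑ i : Fin (p + q), (if (i : ℕ) < p then (1 : ℝ) else -1) * b.repr v i ^ 2

/-- The symmetric bilinear form associated to a quadratic map `Q`. -/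
noncomputable def polarForm {ρ : ℕ} (Q : (Fin ρ → ℝ) → ℝ) (x y : Fin ρ → ℝ) : ℝ :=
  (Q (x + y) - Q x - Q y) / 2

open Module QuadraticMap QuadraticForm

def signPattern (p q : ℕ) (i : Fin (p + q)) : ℝ := if (i : ℕ) < p then 1 else -1

lemma ncard_fin_val_lt (p q : ℕ) : {i : Fin (p + q) | (i : ℕ) < p}.ncard = p := by
  rw [← Nat.card_coe_set_eq, Set.coe_ofPred, Nat.card_eq_fintype_card,
    Fintype.card_fin_lt_of_le (by omega)]

lemma ncard_fin_not_val_lt (p q : ℕ) : {i : Fin (p + q) | ¬ (i : ℕ) < p}.ncard = q := by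
  rw [← Set.compl_ofPred, Set.ncard_compl, ncard_fin_val_lt]
  simp

lemma setOf_signPattern_pos (p q : ℕ) :
    {i | 0 < signPattern p q i} = {i : Fin (p + q) | (i : ℕ) < p} := by
  ext i
  by_cases h : (i : ℕ) < p <;> simp [signPattern, h]

lemma setOf_signPattern_neg (p q : ℕ) :
    {i | signPattern p q i < 0} = {i : Fin (p + q) | ¬ (i : ℕ) < p} := by
  ext i
  by_cases h : (i : ℕ) < p <;> simp [signPattern, h, not_le.2, le_of_not_gt]

lemma exists_equiv_comp_eq_signPattern {n p q : ℕ} (u : Fin n → ℝ)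
    (hu : ∀ i, u i = -1 ∨ u i = 1) (hp : {i | 0 < u i}.ncard = p)
    (hq : {i | u i < 0}.ncard = q) : ∃ σ : Fin (p + q) ≃ Fin n, u ∘ σ = signPattern p q := by
  classical
  set P := {i : Fin (p + q) | (i : ℕ) < p}
  set U := {j | 0 < u j}
  have hUc : Uᶜ = {j | u j < 0} := by
    ext j
    rcases hu j with h | h <;> simp [U, h]
  obtain ⟨e₁⟩ : Nonempty (P ≃ U) := Finite.card_eq.1 <| by
    rw [Nat.card_coe_set_eq, Nat.card_coe_set_eq, ncard_fin_val_lt, hp]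
  obtain ⟨e₂⟩ : Nonempty (↥Pᶜ ≃ ↥Uᶜ) := Finite.card_eq.1 <| by
    rw [Nat.card_coe_set_eq, Nat.card_coe_set_eq, hUc, hq, Set.compl_ofPred, ncard_fin_not_val_lt]
  refine ⟨(Equiv.Set.sumCompl P).symm.trans ((e₁.sumCongr e₂).trans (Equiv.Set.sumCompl U)),
    funext fun i => ?_⟩
  by_cases hi : (i : ℕ) < p
  · have h : 0 < u (e₁ ⟨i, hi⟩) := (e₁ ⟨i, hi⟩).2
    rcases hu (e₁ ⟨i, hi⟩) with h' | h'
    · linarith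
    · simp [Equiv.Set.sumCompl_symm_apply_of_mem (s := P) hi, signPattern, hi, h']
  · have h : ¬ 0 < u (e₂ ⟨i, hi⟩) := (e₂ ⟨i, hi⟩).2
    rcases hu (e₂ ⟨i, hi⟩) with h' | h'
    · simp [Equiv.Set.sumCompl_symm_apply_of_notMem (s := P) hi, signPattern, hi, h']
    · norm_num [h'] at h

lemma QuadraticForm.equivalent_weightedSumSquares_comp {R ι ι' : Type*} [CommRing R] [Fintype ι]
    [Fintype ι'] (u : ι → R) (σ : ι' ≃ ι) :
    (weightedSumSquares R u).Equivalent (weightedSumSquares R (u ∘ σ)) :=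
  ⟨⟨LinearEquiv.funCongrLeft R R σ, fun v => by
    simpa [weightedSumSquares_apply] using σ.sum_comp fun i => u i * (v i * v i)⟩⟩

variable {M : Type*} [AddCommGroup M] [Module ℝ M]

lemma hasSignature_iff_exists_basis {Q : M → ℝ} {p q : ℕ} :
    HasSignature Q p q ↔ ∃ b : Basis (Fin (p + q)) ℝ M,
      ∀ v, Q v = weightedSumSquares ℝ (signPattern p q) (b.equivFun v) := by
  simp [HasSignature, weightedSumSquares_apply, signPattern, _root_.sq]

lemma HasSignature.exists_quadraticForm {Q : M → ℝ} {p q : ℕ} (hQ : HasSignature Q p q) :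
    ∃ Q' : QuadraticForm ℝ M, ⇑Q' = Q := by
  obtain ⟨b, hb⟩ := hasSignature_iff_exists_basis.1 hQ
  exact ⟨(weightedSumSquares ℝ (signPattern p q)).comp b.equivFun.toLinearMap,
    funext fun v => (hb v).symm⟩

namespace QuadraticForm

variable (Q : QuadraticForm ℝ M)

lemma hasSignature_iff_equivalent (p q : ℕ) :
    HasSignature Q p q ↔ Q.Equivalent (weightedSumSquares ℝ (signPattern p q)) := by
  rw [hasSignature_iff_exists_basis]
  constructor
  · rintro ⟨b, hb⟩
    exact ⟨⟨b.equivFun, fun v => (hb v).symm⟩⟩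
  · rintro ⟨e⟩
    exact ⟨Basis.ofEquivFun e.toLinearEquiv, fun v => by
      rw [Basis.equivFun_ofEquivFun, ← e.map_app v]; rfl⟩

lemma apply_add_smul_of_associated_eq_zero {w k : M} (hk : associated (R := ℝ) Q w k = 0)
    (s : ℝ) : Q (k + s • w) = Q k + s ^ 2 * Q w := by
  have h : IsOrtho Q k (s • w) := associated_isOrtho.1 <| by
    rw [map_smul, QuadraticMap.associated_isSymm, hk, smul_zero]
  rw [h, QuadraticMap.map_smul, smul_eq_mul, _root_.sq]

lemma apply_of_mem_sup_span_singleton {w : M} {N : Submodule ℝ M}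
    (hN : N ≤ LinearMap.ker (associated (R := ℝ) Q w)) {x : M}
    (hx : x ∈ N ⊔ Submodule.span ℝ {w}) :
    ∃ n ∈ N, ∃ s : ℝ, x = n + s • w ∧ Q x = Q n + s ^ 2 * Q w := by
  obtain ⟨n, hn, z, hz, rfl⟩ := Submodule.mem_sup.1 hx
  obtain ⟨s, rfl⟩ := Submodule.mem_span_singleton.1 hz
  exact ⟨n, hn, s, rfl, apply_add_smul_of_associated_eq_zero Q (hN hn) s⟩

lemma exists_posDef_le (K : Submodule ℝ M) [FiniteDimensional ℝ K] :
    ∃ P ≤ K, finrank ℝ P = sigPos (Q.restrict K) ∧ ∀ x ∈ P, x ≠ 0 → 0 < Q x := by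
  obtain ⟨V, hV, hpos⟩ := exists_finrank_eq_sigPos_and_posDef (Q.restrict K)
  refine ⟨V.map K.subtype, Submodule.map_subtype_le K V,
    (Submodule.finrank_map_subtype_eq K V).trans hV, ?_⟩
  rintro _ ⟨y, hy, rfl⟩ hy0
  exact hpos ⟨y, hy⟩ (by simpa using hy0)

lemma exists_negDef_le (K : Submodule ℝ M) [FiniteDimensional ℝ K] :
    ∃ N ≤ K, finrank ℝ N = sigNeg (Q.restrict K) ∧ ∀ x ∈ N, x ≠ 0 → Q x < 0 := by
  obtain ⟨N, hNK, hN, hneg⟩ := exists_posDef_le (-Q) K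
  exact ⟨N, hNK, hN, fun x hx hx0 => neg_pos.1 (hneg x hx hx0)⟩

lemma radical_restrict_ker_eq_bot (hrad : Q.radical = ⊥) {w : M} (hQw : Q w ≠ 0) :
    (Q.restrict (LinearMap.ker (associated (R := ℝ) Q w))).radical = ⊥ := by
  rw [radical_eq_ker_associated, eq_bot_iff]
  intro u hu
  rw [Submodule.mem_bot, ← Submodule.coe_eq_zero, ← Submodule.mem_bot ℝ, ← hrad,
    radical_eq_ker_associated, LinearMap.mem_ker]
  ext v
  set t := associated (R := ℝ) Q w v / Q w
  have hk : v - t • w ∈ LinearMap.ker (associated (R := ℝ) Q w) := by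
    simp [t, associated_eq_self_apply, hQw]
  have h1 : associated (R := ℝ) Q u (v - t • w) = 0 :=
    LinearMap.congr_fun (LinearMap.mem_ker.1 hu) ⟨_, hk⟩
  have h2 : associated (R := ℝ) Q u w = 0 := by
    rw [QuadraticMap.associated_isSymm]
    exact u.2
  simpa [h2] using h1

variable [FiniteDimensional ℝ M]

lemma radical_eq_bot_of_sigPos_add_sigNeg_eq (h : sigPos Q + sigNeg Q = finrank ℝ M) :
    Q.radical = ⊥ :=
  Submodule.finrank_eq_zero.1 <| by have := sigPos_add_sigNeg_add_radical (Q := Q); omega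

theorem hasSignature_iff (p q : ℕ) :
    HasSignature Q p q ↔ finrank ℝ M = p + q ∧ sigPos Q = p ∧ sigNeg Q = q := by
  rw [hasSignature_iff_equivalent]
  constructor
  · intro h
    refine ⟨by simpa using h.some.toLinearEquiv.finrank_eq, ?_, ?_⟩
    · rw [sigPos_of_equiv_weightedSumSquares h, setOf_signPattern_pos, ncard_fin_val_lt]
    · rw [sigNeg_of_equiv_weightedSumSquares h, setOf_signPattern_neg, ncard_fin_not_val_lt]
  · rintro ⟨hn, hp, hq⟩
    have hsep : (associated (R := ℝ) Q).SeparatingLeft := by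
      rw [LinearMap.separatingLeft_iff_ker_eq_bot, ← radical_eq_ker_associated]
      exact radical_eq_bot_of_sigPos_add_sigNeg_eq Q (by omega)
    obtain ⟨u, hu, hQu⟩ := equivalent_one_neg_one_weighted_sum_squared Q hsep
    obtain ⟨σ, hσ⟩ := exists_equiv_comp_eq_signPattern u hu
      (by rw [← sigPos_of_equiv_weightedSumSquares hQu, hp])
      (by rw [← sigNeg_of_equiv_weightedSumSquares hQu, hq])
    exact hσ ▸ hQu.trans (equivalent_weightedSumSquares_comp u σ)

lemma sigPos_restrict_le (K : Submodule ℝ M) : sigPos (Q.restrict K) ≤ sigPos Q := by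
  obtain ⟨P, -, hP, hpos⟩ := exists_posDef_le Q K
  exact hP ▸ le_sigPos_of_posDef Q fun x hx => hpos x x.2 (by simpa using hx)

lemma sigNeg_restrict_le (K : Submodule ℝ M) : sigNeg (Q.restrict K) ≤ sigNeg Q :=
  sigPos_restrict_le (-Q) K

lemma sigPos_add_sigNeg_restrict_ker_lt {w : M} (hw : w ≠ 0) (hQw : Q w ≤ 0) :
    sigPos Q + sigNeg (Q.restrict (LinearMap.ker (associated (R := ℝ) Q w))) < finrank ℝ M := by
  obtain ⟨N, hNK, hN, hneg⟩ := exists_negDef_le Q (LinearMap.ker (associated (R := ℝ) Q w))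
  have hwN : w ∉ N := fun h =>
    (hneg w h hw).ne ((associated_eq_self_apply ℝ Q w).symm.trans (hNK h))
  have hnonpos : ∀ x ∈ N ⊔ Submodule.span ℝ {w}, Q x ≤ 0 := by
    intro x hx
    obtain ⟨n, hn, s, -, hQx⟩ := apply_of_mem_sup_span_singleton Q hNK hx
    have hQn : Q n ≤ 0 := by
      rcases eq_or_ne n 0 with rfl | hn0
      · simp
      · exact (hneg n hn hn0).le
    rw [hQx]
    nlinarith [sq_nonneg s]
  have := sigPos_add_finrank_le_of_nonpos hnonpos
  rw [Submodule.finrank_sup_span_singleton hwN, hN] at this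
  omega

lemma sigPos_restrict_ker_lt {w : M} (hQw : 0 < Q w) :
    sigPos (Q.restrict (LinearMap.ker (associated (R := ℝ) Q w))) < sigPos Q := by
  obtain ⟨P, hPK, hP, hpos⟩ := exists_posDef_le Q (LinearMap.ker (associated (R := ℝ) Q w))
  have hwP : w ∉ P := fun h =>
    hQw.ne' ((associated_eq_self_apply ℝ Q w).symm.trans (hPK h))
  have hposDef : (Q.restrict (P ⊔ Submodule.span ℝ {w})).PosDef := by
    rintro ⟨x, hx⟩ hx0
    obtain ⟨n, hn, s, rfl, hQx⟩ := apply_of_mem_sup_span_singleton Q hPK hx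
    rw [restrict_apply, hQx]
    rcases eq_or_ne n 0 with rfl | hn0
    · have hs : s ≠ 0 := by rintro rfl; simp at hx0
      simpa using mul_pos (pow_two_pos_of_ne_zero hs) hQw
    · nlinarith [hpos n hn hn0, sq_nonneg s]
  have := le_sigPos_of_posDef Q hposDef
  rw [Submodule.finrank_sup_span_singleton hwP, hP] at this
  omega

theorem hasSignature_restrict_ker_associated_iff {p q : ℕ} (hQ : HasSignature Q (p + 1) q)
    {w : M} (hw : w ≠ 0) :
    HasSignature (Q.restrict (LinearMap.ker (associated (R := ℝ) Q w))) p q ↔ 0 < Q w := by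
  obtain ⟨hn, hpos, hneg⟩ := (hasSignature_iff Q _ _).1 hQ
  have hrad := radical_eq_bot_of_sigPos_add_sigNeg_eq Q (by omega)
  have hf : associated (R := ℝ) Q w ≠ 0 := fun h => hw <| by
    rwa [← Submodule.mem_bot ℝ, ← hrad, radical_eq_ker_associated, LinearMap.mem_ker]
  have hK := Module.Dual.finrank_ker_add_one_of_ne_zero hf
  rw [hasSignature_iff]
  constructor
  · rintro ⟨-, -, hqK⟩
    by_contra hQw
    have := sigPos_add_sigNeg_restrict_ker_lt Q hw (not_lt.1 hQw)
    omega
  · intro hQw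
    have hposK := sigPos_restrict_ker_lt Q hQw
    have hnegK := sigNeg_restrict_le Q (LinearMap.ker (associated (R := ℝ) Q w))
    have hsum := sigPos_add_sigNeg_add_radical
      (Q := Q.restrict (LinearMap.ker (associated (R := ℝ) Q w)))
    rw [radical_restrict_ker_eq_bot Q hrad hQw.ne', finrank_bot] at hsum
    omega

end QuadraticForm

lemma polarForm_eq_associated {ρ : ℕ} (Q : QuadraticForm ℝ (Fin ρ → ℝ)) (x y : Fin ρ → ℝ) :
    polarForm Q x y = associated (R := ℝ) Q x y := by
  simp only [polarForm, associated_apply, Module.End.smul_def, half_moduleEnd_apply_eq_half_smul,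
    invOf_eq_inv, smul_eq_mul]
  ring

/-- `w` represents the functional `f` through the polar form, so `Q*(f) = Q(w)`. -/
theorem stmt11_general (ρ : ℕ) (Q : (Fin ρ → ℝ) → ℝ)
    (hQ : HasSignature Q 2 (ρ - 2))
    (f : (Fin ρ → ℝ) →ₗ[ℝ] ℝ) (hf : f ≠ 0)
    (w : Fin ρ → ℝ) (hw : ∀ x, polarForm Q w x = f x) :
    HasSignature (fun v : LinearMap.ker f => Q (v : Fin ρ → ℝ)) 1 (ρ - 2) ↔ 0 < Q w := by
  obtain ⟨Q, rfl⟩ := hQ.exists_quadraticForm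
  obtain rfl : associated (R := ℝ) Q w = f :=
    LinearMap.ext fun x => (polarForm_eq_associated Q w x).symm.trans (hw x)
  have hw0 : w ≠ 0 := by
    rintro rfl
    exact hf (by simp)
  exact hasSignature_restrict_ker_associated_iff Q hQ hw0

/-- `Q` has signature `(2, ρ-2)`; `w` is the vector representing the linear functional `f`
via the associated bilinear form, so that the dual form satisfies `Q*(f) = Q(w)`.
Then `Q` restricted to `Ker f` has signature `(1, ρ-2)` iff `Q*(f) > 0`. -/
theorem stmt11 (ρ : ℕ) (hρ : 3 ≤ ρ) (Q : (Fin ρ → ℝ) → ℝ)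
    (hQ : HasSignature Q 2 (ρ - 2))
    (f : (Fin ρ → ℝ) →ₗ[ℝ] ℝ) (hf : f ≠ 0)
    (w : Fin ρ → ℝ) (hw : ∀ x, polarForm Q w x = f x) :
    HasSignature (fun v : LinearMap.ker f => Q (v : Fin ρ → ℝ)) 1 (ρ - 2) ↔ 0 < Q w :=
  stmt11_general ρ Q hQ f hf w hw
end

section
/- Let ρ ≥ 3 and let h, f₁, f₂ be linearly independent linear functionals on ℝ^ρ. Let d > 0 and define M_d := {v ∈ ℝ^ρ : f₁(v)·f₂(v) < 0, h(v)² − d·f₁(v)² < 0, h(v)² − d·f₂(v)² < 0}. Let Q be a quadratic form of signature (2, ρ−2) that is negative definite on Ker h ∩ Ker f₁. Then for every N > 0, there exists a quadratic form Q̃ of signature (2, ρ−2) such that: Ker h ∩ (⋃_{0 ≤ t ≤ N} Ker(f₁ + t·f₂)) ⊆ neg(Q̃) ⊆ M_d ∪ neg(Q), where neg(R) := {v : R(v) < 0} ∪ {0}. -/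
open Module Set

universe u v

theorem Module.Basis.sumExtend_inl {K V ι : Type*} [DivisionRing K] [AddCommGroup V] [Module K V]
    {v : ι → V} (hs : LinearIndependent K v) (i : ι) : Basis.sumExtend hs (Sum.inl i) = v i := by
  simp only [Basis.sumExtend, Basis.reindex_apply, Basis.coe_extend]
  rfl

theorem Module.Basis.eq_zero_of_forall_dual_apply_eq_zero {K V ι : Type*} [Field K]
    [AddCommGroup V] [Module K V] (B : Basis ι K (Dual K V)) {v : V} (hv : ∀ i, B i v = 0) :
    v = 0 :=
  (eval_apply_eq_zero_iff K v).mp <| B.ext fun i => hv i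

theorem LinearIndependent.exists_separating_complement {K : Type u} {V : Type v} {ι : Type*}
    [Field K] [AddCommGroup V] [Module K V] [FiniteDimensional K V] [Fintype ι] {ψ : ι → Dual K V}
    (hψ : LinearIndependent K ψ) :
    ∃ (J : Type (max u v)) (_ : Fintype J) (χ : J → Dual K V),
      Fintype.card ι + Fintype.card J = finrank K V ∧
        ∀ v, (∀ i, ψ i v = 0) → (∀ j, χ j v = 0) → v = 0 := by
  let B := Basis.sumExtend hψ
  have := Module.Finite.finite_basis B
  have := Finite.sum_right ι (β := Basis.sumExtendIndex hψ)
  have := Fintype.ofFinite (Basis.sumExtendIndex hψ)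
  refine ⟨_, inferInstance, fun j => B (.inr j), ?_, fun v hψv hχv => ?_⟩
  · rw [← Subspace.dual_finrank_eq, finrank_eq_nat_card_basis B, Nat.card_sum,
      Nat.card_eq_fintype_card, Nat.card_eq_fintype_card]
  · refine B.eq_zero_of_forall_dual_apply_eq_zero fun i => ?_
    rcases i with i | j
    · rw [Basis.sumExtend_inl]
      exact hψv i
    · exact hχv j

theorem exists_basis_repr_eq_of_separating {K V ι : Type*} [Field K] [AddCommGroup V]
    [Module K V] [FiniteDimensional K V] [Fintype ι] (ψ : ι → Dual K V)
    (hcard : Fintype.card ι = finrank K V) (hψ : ∀ v, (∀ i, ψ i v = 0) → v = 0) :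
    ∃ b : Basis ι K V, ∀ v i, b.repr v i = ψ i v := by
  have hinj : Function.Injective (LinearMap.pi ψ) := by
    rw [← LinearMap.ker_eq_bot, Submodule.eq_bot_iff]
    exact fun v hv => hψ v fun i => congrFun hv i
  let e := (LinearMap.pi ψ).linearEquivOfInjective hinj
    (by rw [finrank_fintype_fun_eq_card, hcard])
  exact ⟨Basis.ofEquivFun e, fun v i => Basis.ofEquivFun_repr_apply e v i⟩

section Signature

variable {V : Type*} [AddCommGroup V] [Module ℝ V] [FiniteDimensional ℝ V]
  {ι κ : Type*} [Fintype ι] [Fintype κ] {p q : ℕ}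

theorem hasSignature_sum_sq_sub_sum_sq (hι : Fintype.card ι = p) (hκ : Fintype.card κ = q)
    (hV : finrank ℝ V = p + q) (pos : ι → Dual ℝ V) (neg : κ → Dual ℝ V)
    (hsep : ∀ v, (∀ i, pos i v = 0) → (∀ j, neg j v = 0) → v = 0) :
    HasSignature (fun v => ∑ i, pos i v ^ 2 - ∑ j, neg j v ^ 2) p q := by
  obtain ⟨b, hb⟩ := exists_basis_repr_eq_of_separating (Sum.elim pos neg)
    (by simp [hι, hκ, hV]) fun v hv => hsep v (fun i => hv (.inl i)) (fun j => hv (.inr j))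
  let σ : ι ⊕ κ ≃ Fin (p + q) :=
    ((Fintype.equivFinOfCardEq hι).sumCongr (Fintype.equivFinOfCardEq hκ)).trans finSumFinEquiv
  refine ⟨b.reindex σ, fun v => ?_⟩
  dsimp only
  rw [← σ.sum_comp, Fintype.sum_sum_type, sub_eq_add_neg, ← Finset.sum_neg_distrib]
  congr 1 <;> refine Finset.sum_congr rfl fun i _ => ?_ <;>
    rw [Basis.repr_reindex_apply, σ.symm_apply_apply, hb] <;> simp [σ]

theorem hasSignature_weighted_sum_sq_sub_sum_sq (hι : Fintype.card ι = p)
    (hκ : Fintype.card κ = q) (hV : finrank ℝ V = p + q) (pos : ι → Dual ℝ V)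
    (neg : κ → Dual ℝ V) (a : ι → ℝ) (b : κ → ℝ) (ha : ∀ i, 0 < a i) (hb : ∀ j, 0 < b j)
    (hsep : ∀ v, (∀ i, pos i v = 0) → (∀ j, neg j v = 0) → v = 0) :
    HasSignature (fun v => ∑ i, a i * pos i v ^ 2 - ∑ j, b j * neg j v ^ 2) p q := by
  have hsig := hasSignature_sum_sq_sub_sum_sq hι hκ hV (fun i => √(a i) • pos i)
    (fun j => √(b j) • neg j) fun v hpos hneg =>
      hsep v (fun i => by simpa [(Real.sqrt_pos.2 (ha i)).ne'] using hpos i)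
        (fun j => by simpa [(Real.sqrt_pos.2 (hb j)).ne'] using hneg j)
  convert hsig using 2 with v
  simp [mul_pow, Real.sq_sqrt (ha _).le, Real.sq_sqrt (hb _).le]

end Signature

namespace HasSignature

variable {p q : ℕ}

theorem apply_smul {V : Type*} [AddCommGroup V] [Module ℝ V] {Q : V → ℝ}
    (hQ : HasSignature Q p q) (c : ℝ) (v : V) : Q (c • v) = c ^ 2 * Q v := by
  obtain ⟨b, hb⟩ := hQ
  rw [hb, hb, Finset.mul_sum]
  refine Finset.sum_congr rfl fun i _ => ?_
  simp only [map_smul, Finsupp.smul_apply, smul_eq_mul]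
  ring

theorem continuous {V : Type*} [NormedAddCommGroup V] [NormedSpace ℝ V] [FiniteDimensional ℝ V]
    {Q : V → ℝ} (hQ : HasSignature Q p q) : Continuous Q := by
  obtain ⟨b, hb⟩ := hQ
  have hcoord : ∀ i, Continuous fun v => b.repr v i :=
    fun i => (b.coord i).continuous_of_finiteDimensional
  rw [funext hb]
  fun_prop

end HasSignature

theorem Continuous.apply_zero_nonpos_of_forall_pos {f : ℝ → ℝ} (hf : Continuous f)
    (hpos : ∀ ε > 0, f ε ≤ 0) : f 0 ≤ 0 :=
  ContinuousWithinAt.closure_le (s := Ioi 0) (by simp [closure_Ioi]) hf.continuousWithinAt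
    continuousWithinAt_const hpos

section WedgeForm

variable {V J : Type*} [AddCommGroup V] [Module ℝ V] [Fintype J]
  (h f₁ f₂ : Dual ℝ V) (χ : J → Dual ℝ V) (N : ℝ)

/-- The form `Q̃_ε` of the header. On `Ker h`, the sign of `f₁ (f₁ + N f₂)` singles out the wedge
between the hyperplanes `Ker f₁` and `Ker (f₁ + N f₂)`. -/
noncomputable def wedgeForm (ε : ℝ) (v : V) : ℝ :=
  ε⁻¹ * h v ^ 2 + f₁ v * (f₁ v + N * f₂ v) - ε * (f₂ v ^ 2 + ∑ j, χ j v ^ 2)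

variable {h f₁ f₂ χ N} {ε : ℝ}

theorem wedgeForm_smul (c : ℝ) (v : V) :
    wedgeForm h f₁ f₂ χ N ε (c • v) = c ^ 2 * wedgeForm h f₁ f₂ χ N ε v := by
  simp only [wedgeForm, map_smul, smul_eq_mul, mul_pow, ← Finset.mul_sum]
  ring

theorem wedgeForm_anti {ε' : ℝ} (hε : 0 < ε) (hεε' : ε ≤ ε') (v : V) :
    wedgeForm h f₁ f₂ χ N ε' v ≤ wedgeForm h f₁ f₂ χ N ε v := by
  unfold wedgeForm
  gcongr

theorem hasSignature_wedgeForm [FiniteDimensional ℝ V] {q : ℕ} (hV : finrank ℝ V = 2 + q)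
    (hJ : Fintype.card J + 1 = q)
    (hsep : ∀ v, h v = 0 → f₁ v = 0 → f₂ v = 0 → (∀ j, χ j v = 0) → v = 0) (hε : 0 < ε) :
    HasSignature (wedgeForm h f₁ f₂ χ N ε) 2 q := by
  convert hasSignature_weighted_sum_sq_sub_sum_sq (by simp) (by simpa using hJ) hV
    ![h, f₁ + (N / 2) • f₂] (fun o : Option J => o.elim f₂ χ) ![ε⁻¹, 1]
    (fun o : Option J => o.elim (N ^ 2 / 4 + ε) fun _ => ε) ?_ ?_ ?_ using 2 with v
  · simp only [wedgeForm, Fin.sum_univ_two, Fintype.sum_option, Matrix.cons_val_zero,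
      Matrix.cons_val_one, Matrix.cons_val_fin_one, LinearMap.add_apply, LinearMap.smul_apply,
      smul_eq_mul, one_mul, Option.elim_none, Option.elim_some, ← Finset.mul_sum]
    ring
  · simp [Fin.forall_fin_two, hε]
  · simp only [Option.forall]
    exact ⟨add_pos_of_nonneg_of_pos (by positivity) hε, fun _ => hε⟩
  · intro v hpos hneg
    have hh := hpos 0
    have hg := hpos 1
    have hf₂ := hneg none
    simp only [Matrix.cons_val_zero, Matrix.cons_val_one, LinearMap.add_apply,
      LinearMap.smul_apply, smul_eq_mul, Option.elim_none] at hh hg hf₂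
    exact hsep v hh (by rw [hf₂] at hg; simpa using hg) hf₂ fun j => hneg (some j)

theorem wedgeForm_neg_of_apply_add_mul_eq_zero
    (hsep : ∀ v, h v = 0 → f₁ v = 0 → f₂ v = 0 → (∀ j, χ j v = 0) → v = 0) (hε : 0 < ε)
    {v : V} (hv : v ≠ 0) (hh : h v = 0) {t : ℝ} (ht : f₁ v + t * f₂ v = 0) (ht₀ : 0 ≤ t)
    (htN : t ≤ N) : wedgeForm h f₁ f₂ χ N ε v < 0 := by
  have hf₁ : f₁ v = -t * f₂ v := by linarith
  have hS : 0 < f₂ v ^ 2 + ∑ j, χ j v ^ 2 := by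
    by_cases hf₂ : f₂ v = 0
    · obtain ⟨j, hj⟩ : ∃ j, χ j v ≠ 0 := by
        by_contra! hχ
        exact hv (hsep v hh (by simp [hf₁, hf₂]) hf₂ hχ)
      have hχj := Finset.single_le_sum (fun j _ => sq_nonneg (χ j v)) (Finset.mem_univ j)
      have : 0 < χ j v ^ 2 := by positivity
      rw [hf₂]
      linarith
    · have : 0 < f₂ v ^ 2 := by positivity
      have : 0 ≤ ∑ j, χ j v ^ 2 := by positivity
      linarith
  have hmid : f₁ v * (f₁ v + N * f₂ v) = -(t * (N - t)) * f₂ v ^ 2 := by rw [hf₁]; ring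
  rw [wedgeForm, hh, hmid]
  nlinarith [mul_nonneg ht₀ (sub_nonneg.2 htN), sq_nonneg (f₂ v), mul_pos hε hS]

theorem forall_wedgeForm_nonpos_iff {u : V} :
    (∀ ε > 0, wedgeForm h f₁ f₂ χ N ε u ≤ 0) ↔ h u = 0 ∧ f₁ u * (f₁ u + N * f₂ u) ≤ 0 := by
  set B := f₁ u * (f₁ u + N * f₂ u)
  set S := f₂ u ^ 2 + ∑ j, χ j u ^ 2
  have hS : 0 ≤ S := by positivity
  have hform : ∀ ε, wedgeForm h f₁ f₂ χ N ε u = ε⁻¹ * h u ^ 2 + B - ε * S := fun ε => rfl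
  constructor
  · intro hu
    -- `ε * Q̃_ε u` extends continuously to `ε = 0`, where it equals `h u ^ 2`.
    have hlim := Continuous.apply_zero_nonpos_of_forall_pos
      (f := fun ε => h u ^ 2 + ε * B - ε ^ 2 * S) (by fun_prop) fun ε hε => by
        have hεu := mul_nonpos_of_nonneg_of_nonpos hε.le (hu ε hε)
        rw [hform] at hεu
        field_simp at hεu
        linarith
    have hh₀ : h u = 0 := by simpa using hlim
    refine ⟨hh₀, ?_⟩
    simpa using Continuous.apply_zero_nonpos_of_forall_pos (f := fun ε => B - ε * S)
      (by fun_prop) fun ε hε => by simpa [hform, hh₀] using hu ε hε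
  · rintro ⟨hh, hB⟩ ε hε
    rw [hform, hh]
    nlinarith [mul_nonneg hε.le hS]

end WedgeForm

section WedgeRegion

variable {V : Type*} [AddCommGroup V] [Module ℝ V] {h f₁ f₂ : Dual ℝ V} {d : ℝ}

/-- The set `M_d` of the statement. -/
def regionM (h f₁ f₂ : Dual ℝ V) (d : ℝ) : Set V :=
  {v | f₁ v * f₂ v < 0 ∧ h v ^ 2 - d * f₁ v ^ 2 < 0 ∧ h v ^ 2 - d * f₂ v ^ 2 < 0}

theorem smul_mem_regionM_iff {c : ℝ} (hc : c ≠ 0) {v : V} :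
    c • v ∈ regionM h f₁ f₂ d ↔ v ∈ regionM h f₁ f₂ d := by
  have hc2 : 0 < c ^ 2 := by positivity
  have hscale : ∀ x : ℝ, c ^ 2 * x < 0 ↔ x < 0 := fun x =>
    ⟨fun hx => neg_of_mul_neg_right hx hc2.le, mul_neg_of_pos_of_neg hc2⟩
  simp only [regionM, mem_ofPred_eq, map_smul, smul_eq_mul]
  rw [← hscale (f₁ v * f₂ v), ← hscale (h v ^ 2 - d * f₁ v ^ 2),
    ← hscale (h v ^ 2 - d * f₂ v ^ 2)]
  ring_nf

theorem apply_eq_zero_of_notMem_regionM (hd : 0 < d) {N : ℝ} (hN : 0 ≤ N) {u : V}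
    (hu : u ∉ regionM h f₁ f₂ d) (hh : h u = 0) (hB : f₁ u * (f₁ u + N * f₂ u) ≤ 0) :
    f₁ u = 0 := by
  by_contra hf₁
  have hf₁2 : 0 < f₁ u ^ 2 := by positivity
  have hf₂ : f₂ u ≠ 0 := by
    rintro hf₂
    rw [hf₂] at hB
    nlinarith
  have hf₂2 : 0 < f₂ u ^ 2 := by positivity
  have hsign : 0 ≤ f₁ u * f₂ u := by
    by_contra hneg
    exact hu ⟨not_le.1 hneg, by rw [hh]; nlinarith, by rw [hh]; nlinarith⟩
  nlinarith [mul_nonneg hN hsign]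

end WedgeRegion

section Compactness

variable {V J : Type*} [NormedAddCommGroup V] [NormedSpace ℝ V] [FiniteDimensional ℝ V]
  [Fintype J] {h f₁ f₂ : Dual ℝ V} {χ : J → Dual ℝ V} {N d : ℝ} {Q : V → ℝ}

theorem continuous_wedgeForm (ε : ℝ) : Continuous (wedgeForm h f₁ f₂ χ N ε) := by
  have hc : ∀ f : Dual ℝ V, Continuous f := fun f => f.continuous_of_finiteDimensional
  unfold wedgeForm
  fun_prop

theorem isOpen_regionM : IsOpen (regionM h f₁ f₂ d) := by
  have hc : ∀ f : Dual ℝ V, Continuous f := fun f => f.continuous_of_finiteDimensional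
  exact (isOpen_lt (f := fun v => f₁ v * f₂ v) (by fun_prop) continuous_const).inter
    ((isOpen_lt (f := fun v => h v ^ 2 - d * f₁ v ^ 2) (by fun_prop) continuous_const).inter
      (isOpen_lt (f := fun v => h v ^ 2 - d * f₂ v ^ 2) (by fun_prop) continuous_const))

variable (hQ : Continuous Q) (hneg : ∀ v, h v = 0 → f₁ v = 0 → v ≠ 0 → Q v < 0) (hd : 0 < d)
  (hN : 0 ≤ N)
include hQ hneg hd hN

theorem exists_pos_forall_mem_sphere_wedgeForm_nonpos :
    ∃ ε > 0, ∀ u ∈ Metric.sphere (0 : V) 1, wedgeForm h f₁ f₂ χ N ε u ≤ 0 →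
      u ∉ regionM h f₁ f₂ d → Q u < 0 := by
  let T : Ioi (0 : ℝ) → Set V := fun ε =>
    {u | wedgeForm h f₁ f₂ χ N ε u ≤ 0} ∩ (regionM h f₁ f₂ d)ᶜ ∩ {u | 0 ≤ Q u}
  have hT : Monotone T := fun ε ε' hεε' u ⟨⟨hu, hM⟩, hQu⟩ =>
    ⟨⟨(wedgeForm_anti ε.2 hεε' u).trans hu, hM⟩, hQu⟩
  have hTc : ∀ ε, IsClosed (T ε) := fun ε =>
    ((isClosed_le (continuous_wedgeForm ε) continuous_const).inter
      isOpen_regionM.isClosed_compl).inter (isClosed_le continuous_const hQ)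
  have hempty : Metric.sphere (0 : V) 1 ∩ ⋂ ε, T ε = ∅ := by
    refine eq_empty_iff_forall_notMem.2 fun u ⟨hu, huT⟩ => ?_
    rw [mem_iInter] at huT
    obtain ⟨hh, hB⟩ := forall_wedgeForm_nonpos_iff.1 fun ε hε => (huT ⟨ε, hε⟩).1.1
    obtain ⟨⟨-, hM⟩, hQu⟩ := huT ⟨1, mem_Ioi.2 one_pos⟩
    have hu₀ : u ≠ 0 := by rintro rfl; simp at hu
    exact (hneg u hh (apply_eq_zero_of_notMem_regionM hd hN hM hh hB) hu₀).not_ge hQu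
  obtain ⟨ε, hε⟩ := (isCompact_sphere (0 : V) 1).elim_directed_family_closed T hTc hempty
    hT.directed_ge
  exact ⟨ε, ε.2, fun u hu hwu hM =>
    not_le.1 fun hQu => (eq_empty_iff_forall_notMem.1 hε u) ⟨hu, ⟨hwu, hM⟩, hQu⟩⟩

theorem exists_pos_setOf_wedgeForm_neg_subset (hQs : ∀ (c : ℝ) v, Q (c • v) = c ^ 2 * Q v) :
    ∃ ε > 0, {v | wedgeForm h f₁ f₂ χ N ε v < 0} ⊆ regionM h f₁ f₂ d ∪ {v | Q v < 0} := by
  obtain ⟨ε, hε, hsphere⟩ := exists_pos_forall_mem_sphere_wedgeForm_nonpos (χ := χ) hQ hneg hd hN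
  refine ⟨ε, hε, fun v hv => or_iff_not_imp_left.2 fun hM => ?_⟩
  have hv₀ : v ≠ 0 := by rintro rfl; simp [wedgeForm] at hv
  have hc : ‖v‖⁻¹ ≠ 0 := inv_ne_zero (norm_ne_zero_iff.2 hv₀)
  have hQv := hsphere (‖v‖⁻¹ • v) (by simpa using norm_smul_inv_norm (𝕜 := ℝ) hv₀)
    (by rw [wedgeForm_smul]; exact mul_nonpos_of_nonneg_of_nonpos (sq_nonneg _) (le_of_lt hv))
    ((smul_mem_regionM_iff hc).not.2 hM)
  rw [hQs] at hQv
  exact neg_of_mul_neg_right hQv (sq_nonneg _)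

end Compactness

theorem stmt13_general (ρ : ℕ)
    (h f₁ f₂ : (Fin ρ → ℝ) →ₗ[ℝ] ℝ) (hind : LinearIndependent ℝ ![h, f₁, f₂])
    (d : ℝ) (hd : 0 < d)
    (Q : (Fin ρ → ℝ) → ℝ) (hQ : HasSignature Q 2 (ρ - 2))
    (hneg : ∀ v : Fin ρ → ℝ, h v = 0 → f₁ v = 0 → v ≠ 0 → Q v < 0) :
    ∀ N : ℝ, 0 < N → ∃ Qt : (Fin ρ → ℝ) → ℝ, HasSignature Qt 2 (ρ - 2) ∧
      ({v : Fin ρ → ℝ | h v = 0} ∩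
          ⋃ t ∈ Set.Icc (0 : ℝ) N, {v : Fin ρ → ℝ | f₁ v + t * f₂ v = 0}) ⊆
        ({v : Fin ρ → ℝ | Qt v < 0} ∪ {0}) ∧
      ({v : Fin ρ → ℝ | Qt v < 0} ∪ {0}) ⊆
        ({v : Fin ρ → ℝ |
            f₁ v * f₂ v < 0 ∧ (h v) ^ 2 - d * (f₁ v) ^ 2 < 0 ∧
              (h v) ^ 2 - d * (f₂ v) ^ 2 < 0} ∪
          ({v : Fin ρ → ℝ | Q v < 0} ∪ {0})) := by
  intro N hN
  obtain ⟨J, _, χ, hcard, hsep⟩ := hind.exists_separating_complement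
  replace hsep : ∀ v, h v = 0 → f₁ v = 0 → f₂ v = 0 → (∀ j, χ j v = 0) → v = 0 :=
    fun v hh h₁ h₂ => hsep v (by simp [Fin.forall_fin_succ, hh, h₁, h₂])
  rw [Fintype.card_fin, finrank_fin_fun] at hcard
  obtain ⟨ε, hε, hQt⟩ := exists_pos_setOf_wedgeForm_neg_subset (χ := χ) hQ.continuous hneg hd
    hN.le hQ.apply_smul
  refine ⟨wedgeForm h f₁ f₂ χ N ε, hasSignature_wedgeForm (by rw [finrank_fin_fun]; omega)
    (by omega) hsep hε, ?_, (union_subset_union_left _ hQt).trans (union_assoc _ _ _).subset⟩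
  rintro v ⟨hh, hv⟩
  obtain ⟨t, ⟨ht₀, htN⟩, ht⟩ := mem_iUnion₂.1 hv
  by_cases hv₀ : v = 0
  · exact Or.inr hv₀
  · exact Or.inl (wedgeForm_neg_of_apply_add_mul_eq_zero hsep hε hv₀ hh ht ht₀ htN)

theorem stmt13 (ρ : ℕ) (hρ : 3 ≤ ρ)
    (h f₁ f₂ : (Fin ρ → ℝ) →ₗ[ℝ] ℝ) (hind : LinearIndependent ℝ ![h, f₁, f₂])
    (d : ℝ) (hd : 0 < d)
    (Q : (Fin ρ → ℝ) → ℝ) (hQ : HasSignature Q 2 (ρ - 2))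
    (hneg : ∀ v : Fin ρ → ℝ, h v = 0 → f₁ v = 0 → v ≠ 0 → Q v < 0) :
    ∀ N : ℝ, 0 < N → ∃ Qt : (Fin ρ → ℝ) → ℝ, HasSignature Qt 2 (ρ - 2) ∧
      ({v : Fin ρ → ℝ | h v = 0} ∩
          ⋃ t ∈ Set.Icc (0 : ℝ) N, {v : Fin ρ → ℝ | f₁ v + t * f₂ v = 0}) ⊆
        ({v : Fin ρ → ℝ | Qt v < 0} ∪ {0}) ∧
      ({v : Fin ρ → ℝ | Qt v < 0} ∪ {0}) ⊆
        ({v : Fin ρ → ℝ |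
            f₁ v * f₂ v < 0 ∧ (h v) ^ 2 - d * (f₁ v) ^ 2 < 0 ∧
              (h v) ^ 2 - d * (f₂ v) ^ 2 < 0} ∪
          ({v : Fin ρ → ℝ | Q v < 0} ∪ {0})) :=
  stmt13_general ρ h f₁ f₂ hind d hd Q hQ hneg
end
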